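/- arXiv:2506.05037 — 5 statements merged into one kernel-verified Lean document; each statement's English description precedes it below -/
import Mathlib

section
/- Let 0 < s ≤ 1 and 0 < p < ∞. Let u : X → ℝ be measurable and finite μ-a.e., let g be an s-gradient of u, and let E, F ⊂ X be measurable sets of finite positive measure. Then |m_u(E) − m_u(F)|^p ≤ C(p) · D(E,F)^{sp} · ( ⨍_E g(x)^p dμ(x) + ⨍_F g(y)^p dμ(y) ), where D(E,F) = sup{d(x,y) : x ∈ E, y ∈ F} and C(p) > 0 is a constant depending only on p. -/
open MeasureTheory Metric Set Filter
open scoped ENNReal NNReal Topology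

noncomputable section
namespace Paper

variable {X : Type*} [MetricSpace X] [MeasurableSpace X]

/-- The median `m_u(E)` of a function `u` over a set `E`. -/
def median (μ : Measure X) (u : X → ℝ) (E : Set X) : ℝ :=
  sInf {a : ℝ | μ {x | x ∈ E ∧ a < u x} < μ E / 2}

/-- `g` is an `s`-gradient of `u` (with respect to `μ`). -/
def IsSGradient (μ : Measure X) (s : ℝ) (u : X → ℝ) (g : X → ℝ≥0∞) : Prop :=
  Measurable g ∧ ∃ N : Set X, μ N = 0 ∧ ∀ x ∉ N, ∀ y ∉ N,
    ENNReal.ofReal |u x - u y| ≤ ENNReal.ofReal (dist x y ^ s) * (g x + g y)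

/-- The `p`-th power of the `L^p` quasinorm of `u : X → ℝ` restricted to `F`. -/
def lpNormP (μ : Measure X) (p : ℝ) (u : X → ℝ) (F : Set X) : ℝ≥0∞ :=
  ∫⁻ x in F, ENNReal.ofReal |u x| ^ p ∂μ

/-- Membership in the homogeneous Hajłasz–Sobolev space `Ṁ^{s,p}(X)`:
`u` is measurable (hence finite everywhere, being real valued) and has an
`s`-gradient in `L^p`. -/
def MemHomHajlasz (μ : Measure X) (s p : ℝ) (u : X → ℝ) : Prop :=
  Measurable u ∧ ∃ g : X → ℝ≥0∞, IsSGradient μ s u g ∧ (∫⁻ x, g x ^ p ∂μ) < ⊤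

/-- The homogeneous Hajłasz quasi-seminorm `‖u‖_{Ṁ^{s,p}}`. -/
def hajlaszSeminorm (μ : Measure X) (s p : ℝ) (u : X → ℝ) : ℝ≥0∞ :=
  ⨅ (g : X → ℝ≥0∞) (_ : IsSGradient μ s u g), (∫⁻ x, g x ^ p ∂μ) ^ (1 / p)

/-- The quasi-seminorm `‖u‖_{M^{s,p}} = ‖u‖_{L^p} + ‖u‖_{Ṁ^{s,p}}`. -/
def hajlaszNorm (μ : Measure X) (s p : ℝ) (u : X → ℝ) : ℝ≥0∞ :=
  lpNormP μ p u Set.univ ^ (1 / p) + hajlaszSeminorm μ s p u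

/-- The capacity `Cap_{M^{s,p}}(E)`; the infimum over the empty set is `⊤ = ∞`. -/
def hajlaszCapacity (μ : Measure X) (s p : ℝ) (E : Set X) : ℝ≥0∞ :=
  ⨅ (u : X → ℝ) (_ : MemHomHajlasz μ s p u ∧ lpNormP μ p u Set.univ < ⊤ ∧
      ∃ U : Set X, IsOpen U ∧ E ⊆ U ∧ ∀ x ∈ U, 1 ≤ u x),
    hajlaszNorm μ s p u ^ p

/-- `M^{s,p}`-quasicontinuity of `u`. -/
def HajlaszQC (μ : Measure X) (s p : ℝ) (u : X → ℝ) : Prop :=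
  ∀ ε : ℝ, 0 < ε → ∃ E : Set X,
    hajlaszCapacity μ s p E < ENNReal.ofReal ε ∧ ContinuousOn u Eᶜ

/-- The variational relative capacity `cap_{s,p}(E,F)`. -/
def relCap (μ : Measure X) (s p : ℝ) (E F : Set X) : ℝ≥0∞ :=
  ⨅ (v : X → ℝ) (_ : MemHomHajlasz μ s p v ∧ HajlaszQC μ s p v ∧ ∀ x ∈ E, 1 ≤ v x),
    (lpNormP μ p v F / ENNReal.ofReal (Metric.diam F ^ (s * p)) +
      ⨅ (g : X → ℝ≥0∞) (_ : IsSGradient μ s v g), ∫⁻ x in F, g x ^ p ∂μ)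

/-- The annulus `A_r(O) = B(O, κ r) \ B(O, r)`. -/
def ann (κ : ℝ) (O : X) (r : ℝ) : Set X := ball O (κ * r) \ ball O r

/-- The enlarged annulus `Λ A_r(O) = B(O, Λ κ r) \ B(O, r / Λ)`. -/
def annL (κ Λ : ℝ) (O : X) (r : ℝ) : Set X := ball O (Λ * (κ * r)) \ ball O (r / Λ)

/-- `E` is `(s,p)`-thin at infinity with respect to the basepoint `O`. -/
def ThinAtInfinity (μ : Measure X) (s p κ : ℝ) (O : X) (E : Set X) : Prop :=
  ∀ Λ : ℝ, 1 < Λ →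
    Tendsto (fun m : ℕ =>
        ∑' j : ℕ, relCap μ s p (E ∩ ann κ O (κ ^ (m + j))) (annL κ Λ O (κ ^ (m + j))))
      atTop (𝓝 0)

/-- `u(x) → c` as `d(x,O) → ∞` along `x ∈ X \ E`. -/
def TendstoOutside (O : X) (E : Set X) (u : X → ℝ) (c : ℝ) : Prop :=
  ∀ ε : ℝ, 0 < ε → ∃ N : ℕ, ∀ x : X, x ∉ E → (N : ℝ) < dist x O → |u x - c| < ε

/-- The `ρ`-restricted Hausdorff content of codimension `d`, where the infimum runs
over all finite or countable coverings of `E` by balls of positive radii at most `ρ`. -/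
def hContent (μ : Measure X) (d : ℝ) (ρ : ℝ≥0∞) (E : Set X) : ℝ≥0∞ :=
  ⨅ (c : ℕ → X) (r : ℕ → ℝ) (J : Set ℕ)
    (_ : (∀ j ∈ J, 0 < r j ∧ ENNReal.ofReal (r j) ≤ ρ) ∧
        E ⊆ ⋃ j ∈ J, ball (c j) (r j)),
    ∑' j : J, μ (ball (c (j : ℕ)) (r (j : ℕ))) / ENNReal.ofReal (r (j : ℕ) ^ d)

/-- The homogeneous fractional Sobolev quasinorm `‖u‖_{Ẇ^{s,p}_q}`. -/
def fracNorm (μ : Measure X) (s p q : ℝ) (u : X → ℝ) : ℝ≥0∞ :=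
  (∫⁻ x, (∫⁻ y, ENNReal.ofReal |u x - u y| ^ q /
      (ENNReal.ofReal (dist x y ^ (s * q)) * μ (ball x (dist x y))) ∂μ) ^ (p / q) ∂μ) ^ (1 / p)

/-- Membership in the homogeneous fractional Sobolev space `Ẇ^{s,p}_q(X)`. -/
def MemFrac (μ : Measure X) (s p q : ℝ) (u : X → ℝ) : Prop :=
  Measurable u ∧ fracNorm μ s p q u < ⊤

/-- The capacity `Cap_{W^{s,p}_q}(E)`; the infimum over the empty set is `⊤ = ∞`. -/
def fracCapacity (μ : Measure X) (s p q : ℝ) (E : Set X) : ℝ≥0∞ :=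
  ⨅ (u : X → ℝ) (_ : MemFrac μ s p q u ∧ lpNormP μ p u Set.univ < ⊤ ∧
      ∃ U : Set X, IsOpen U ∧ E ⊆ U ∧ ∀ x ∈ U, 1 ≤ u x),
    (lpNormP μ p u Set.univ ^ (1 / p) + fracNorm μ s p q u) ^ p

/-- `W^{s,p}_q`-quasicontinuity of `u`. -/
def FracQC (μ : Measure X) (s p q : ℝ) (u : X → ℝ) : Prop :=
  ∀ ε : ℝ, 0 < ε → ∃ E : Set X,
    fracCapacity μ s p q E < ENNReal.ofReal ε ∧ ContinuousOn u Eᶜ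

/-!
At least half of `E` lies where `u ≤ m_u(E)` and at least half where `u ≥ m_u(E)`. If, say,
`m_u(E) ≤ m_u(F)`, then for `x` in the lower half `A` of `E` and `y` in the upper half `B` of `F`
(off the null set of the gradient inequality) we get, with `D = D(E,F)`,
`|m_u(E) - m_u(F)| ≤ |u x - u y| ≤ D^s (g x + g y)`, hence
`|m_u(E) - m_u(F)|^p ≤ 2^p D^{sp} (g x^p + g y^p)`. Averaging over `A × B` bounds the left side by
`2^p D^{sp} (⨍_A g^p + ⨍_B g^p)`, and an average over a half is at most twice the average over
the whole set, so `C(p) = 2^{p+1}` works.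
-/

section Median

variable {α : Type*}

lemma antitone_superlevel (E : Set α) (u : α → ℝ) :
    Antitone fun a : ℝ => {x | x ∈ E ∧ a < u x} :=
  fun _ _ hab _ hx => ⟨hx.1, hab.trans_lt hx.2⟩

variable [MeasurableSpace α] {μ : Measure α} {u : α → ℝ} {E : Set α}

def medianSet (μ : Measure α) (u : α → ℝ) (E : Set α) : Set ℝ :=
  {a | μ {x | x ∈ E ∧ a < u x} < μ E / 2}

lemma mem_medianSet_of_le {a b : ℝ} (ha : a ∈ medianSet μ u E) (hab : a ≤ b) :
    b ∈ medianSet μ u E :=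
  (measure_mono (antitone_superlevel E u hab)).trans_lt ha

lemma medianSet_nonempty (hu : Measurable u) (hE : MeasurableSet E) (hE0 : μ E ≠ 0)
    (hEt : μ E ≠ ⊤) : (medianSet μ u E).Nonempty := by
  have hempty : (⋂ a : ℝ, {x | x ∈ E ∧ a < u x}) = ∅ :=
    eq_empty_of_forall_notMem fun x hx => lt_irrefl _ (mem_iInter.1 hx (u x)).2
  have htend := tendsto_measure_iInter_atTop (μ := μ)
    (s := fun a : ℝ => {x | x ∈ E ∧ a < u x})
    (fun _ => (hE.inter (hu measurableSet_Ioi)).nullMeasurableSet) (antitone_superlevel E u)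
    ⟨0, ne_top_of_le_ne_top hEt (measure_mono fun _ hx => hx.1)⟩
  rw [hempty, measure_empty] at htend
  exact (htend.eventually (gt_mem_nhds (ENNReal.half_pos hE0))).exists

lemma bddBelow_medianSet (hE0 : μ E ≠ 0) (hEt : μ E ≠ ⊤) : BddBelow (medianSet μ u E) := by
  have hunion : (⋃ a : ℝ, {x | x ∈ E ∧ a < u x}) = E :=
    Subset.antisymm (iUnion_subset fun _ _ hx => hx.1)
      fun x hx => mem_iUnion.2 ⟨u x - 1, hx, by linarith⟩
  have htend := tendsto_measure_iUnion_atBot (μ := μ) (antitone_superlevel E u)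
  rw [hunion] at htend
  obtain ⟨b, hb⟩ := eventually_atBot.1
    (htend.eventually (lt_mem_nhds (ENNReal.half_lt_self hE0 hEt)))
  exact ⟨b, fun a ha => le_of_not_gt fun hab => lt_asymm (hb a hab.le) ha⟩

lemma measure_median_lt_le_half (hu : Measurable u) (hE : MeasurableSet E) (hE0 : μ E ≠ 0)
    (hEt : μ E ≠ ⊤) : μ {x | x ∈ E ∧ median μ u E < u x} ≤ μ E / 2 := by
  obtain ⟨a, ha_anti, ha_gt, ha_lim⟩ := exists_seq_strictAnti_tendsto (median μ u E)
  have hunion : {x | x ∈ E ∧ median μ u E < u x} = ⋃ n, {x | x ∈ E ∧ a n < u x} := by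
    refine Subset.antisymm (fun x ⟨hx, hlt⟩ => ?_)
      (iUnion_subset fun n x ⟨hx, hn⟩ => ⟨hx, (ha_gt n).trans hn⟩)
    obtain ⟨n, hn⟩ := (ha_lim.eventually (gt_mem_nhds hlt)).exists
    exact mem_iUnion.2 ⟨n, hx, hn⟩
  rw [hunion, Monotone.measure_iUnion (s := fun n => {x | x ∈ E ∧ a n < u x})
    ((antitone_superlevel E u).comp ha_anti.antitone)]
  refine iSup_le fun n => le_of_lt ?_
  obtain ⟨b, hb, hbn⟩ := exists_lt_of_csInf_lt (medianSet_nonempty hu hE hE0 hEt) (ha_gt n)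
  exact mem_medianSet_of_le hb hbn.le

lemma half_le_measure_le_median (hu : Measurable u) (hE : MeasurableSet E) (hE0 : μ E ≠ 0)
    (hEt : μ E ≠ ⊤) : μ E / 2 ≤ μ {x | x ∈ E ∧ u x ≤ median μ u E} := by
  have hsplit := measure_inter_add_sdiff (μ := μ) E (t := u ⁻¹' Iic (median μ u E))
    (hu measurableSet_Iic)
  have hdiff : E \ u ⁻¹' Iic (median μ u E) = {x | x ∈ E ∧ median μ u E < u x} := by
    ext x
    simp [not_le]
  rw [hdiff] at hsplit
  have hhalf : μ E / 2 ≠ ⊤ := ne_top_of_le_ne_top hEt ENNReal.half_le_self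
  refine (ENNReal.add_le_add_iff_right hhalf).1 ?_
  calc μ E / 2 + μ E / 2 = μ E := ENNReal.add_halves _
    _ = _ := hsplit.symm
    _ ≤ _ := add_le_add_right (measure_median_lt_le_half hu hE hE0 hEt) _

lemma half_le_measure_median_le (hu : Measurable u) (hE : MeasurableSet E) (hE0 : μ E ≠ 0)
    (hEt : μ E ≠ ⊤) : μ E / 2 ≤ μ {x | x ∈ E ∧ median μ u E ≤ u x} := by
  obtain ⟨b, hb_mono, hb_lt, hb_lim⟩ := exists_seq_strictMono_tendsto (median μ u E)
  have hinter : {x | x ∈ E ∧ median μ u E ≤ u x} = ⋂ n, {x | x ∈ E ∧ b n < u x} := by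
    refine Subset.antisymm
      (fun x ⟨hx, hle⟩ => mem_iInter.2 fun n => ⟨hx, (hb_lt n).trans_le hle⟩) fun x hx => ?_
    have h := mem_iInter.1 hx
    exact ⟨(h 0).1, le_of_tendsto' hb_lim fun n => (h n).2.le⟩
  rw [hinter, Antitone.measure_iInter (s := fun n => {x | x ∈ E ∧ b n < u x})
    ((antitone_superlevel E u).comp_monotone hb_mono.monotone)
    (fun _ => (hE.inter (hu measurableSet_Ioi)).nullMeasurableSet)
    ⟨0, ne_top_of_le_ne_top hEt (measure_mono fun _ hx => hx.1)⟩]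
  exact le_iInf fun n => not_lt.1 <|
    notMem_of_lt_csInf (s := medianSet μ u E) (hb_lt n) (bddBelow_medianSet hE0 hEt)

lemma exists_subsets_abs_median_sub_le {F : Set α} (hu : Measurable u)
    (hE : MeasurableSet E) (hE0 : μ E ≠ 0) (hEt : μ E ≠ ⊤)
    (hF : MeasurableSet F) (hF0 : μ F ≠ 0) (hFt : μ F ≠ ⊤) :
    ∃ A ⊆ E, ∃ B ⊆ F, MeasurableSet A ∧ MeasurableSet B ∧ μ E / 2 ≤ μ A ∧ μ F / 2 ≤ μ B ∧
      ∀ x ∈ A, ∀ y ∈ B, |median μ u E - median μ u F| ≤ |u x - u y| := by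
  rcases le_total (median μ u E) (median μ u F) with h | h
  · refine ⟨{x | x ∈ E ∧ u x ≤ median μ u E}, fun _ hx => hx.1,
      {y | y ∈ F ∧ median μ u F ≤ u y}, fun _ hy => hy.1, hE.inter (hu measurableSet_Iic),
      hF.inter (hu measurableSet_Ici), half_le_measure_le_median hu hE hE0 hEt,
      half_le_measure_median_le hu hF hF0 hFt, fun x hx y hy => ?_⟩
    rw [abs_sub_comm, abs_sub_comm (u x)]
    exact abs_le_abs (by linarith [hx.2, hy.2]) (by linarith [hx.2, hy.2])
  · refine ⟨{x | x ∈ E ∧ median μ u E ≤ u x}, fun _ hx => hx.1,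
      {y | y ∈ F ∧ u y ≤ median μ u F}, fun _ hy => hy.1, hE.inter (hu measurableSet_Ici),
      hF.inter (hu measurableSet_Iic), half_le_measure_median_le hu hE hE0 hEt,
      half_le_measure_le_median hu hF hF0 hFt, fun x hx y hy => ?_⟩
    exact abs_le_abs (by linarith [hx.2, hy.2]) (by linarith [hx.2, hy.2])

end Median

section Average

variable {α : Type*} [MeasurableSpace α] {μ : Measure α} {s t : Set α}

lemma laverage_const_mul {f : α → ℝ≥0∞} (hf : Measurable f) (c : ℝ≥0∞) :
    ⨍⁻ x, c * f x ∂μ = c * ⨍⁻ x, f x ∂μ :=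
  lintegral_const_mul c hf

lemma setLAverage_add_const (hs₀ : μ s ≠ 0) (hs : μ s ≠ ∞) (f : α → ℝ≥0∞) (c : ℝ≥0∞) :
    ⨍⁻ x in s, (f x + c) ∂μ = ⨍⁻ x in s, f x ∂μ + c := by
  rw [setLAverage_eq, setLAverage_eq, lintegral_add_right' _ aemeasurable_const,
    setLIntegral_const, ENNReal.add_div, ENNReal.mul_div_cancel_right hs₀ hs]

lemma le_setLAverage_add_setLAverage {c : ℝ≥0∞} {f h : α → ℝ≥0∞}
    (hs₀ : μ s ≠ 0) (hs : μ s ≠ ∞) (ht₀ : μ t ≠ 0) (ht : μ t ≠ ∞)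
    (hc : ∀ᵐ x ∂μ.restrict s, ∀ᵐ y ∂μ.restrict t, c ≤ f x + h y) :
    c ≤ ⨍⁻ x in s, f x ∂μ + ⨍⁻ y in t, h y ∂μ := by
  have hinner : ∀ᵐ x ∂μ.restrict s, c ≤ f x + ⨍⁻ y in t, h y ∂μ := by
    filter_upwards [hc] with x hx
    calc c = ⨍⁻ _ in t, c ∂μ := (setLAverage_const ht₀ ht c).symm
      _ ≤ ⨍⁻ y in t, (h y + f x) ∂μ :=
          laverage_mono_ae (hx.mono fun y hy => hy.trans_eq (add_comm _ _))
      _ = f x + ⨍⁻ y in t, h y ∂μ := by rw [setLAverage_add_const ht₀ ht, add_comm]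
  calc c = ⨍⁻ _ in s, c ∂μ := (setLAverage_const hs₀ hs c).symm
    _ ≤ ⨍⁻ x in s, (f x + ⨍⁻ y in t, h y ∂μ) ∂μ := laverage_mono_ae hinner
    _ = _ := setLAverage_add_const hs₀ hs _ _

lemma setLAverage_le_two_mul_of_subset (hst : s ⊆ t) (hhalf : μ t / 2 ≤ μ s) (f : α → ℝ≥0∞) :
    ⨍⁻ x in s, f x ∂μ ≤ 2 * ⨍⁻ x in t, f x ∂μ := by
  rw [setLAverage_eq, setLAverage_eq]
  calc (∫⁻ x in s, f x ∂μ) / μ s ≤ (∫⁻ x in t, f x ∂μ) / (μ t / 2) :=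
        ENNReal.div_le_div (lintegral_mono_set hst) hhalf
    _ = 2 * ((∫⁻ x in t, f x ∂μ) / μ t) := by
        rw [div_eq_mul_inv, div_eq_mul_inv, div_eq_mul_inv,
          ENNReal.mul_inv (Or.inr (by norm_num)) (Or.inr (by norm_num)), inv_inv]
        ring

end Average

lemma IsSGradient.ae_ae_rpow_le {μ : Measure X} {s p : ℝ} {u : X → ℝ} {g : X → ℝ≥0∞}
    (hg : IsSGradient μ s u g) (hs : 0 ≤ s) (hp : 0 ≤ p) :
    ∀ᵐ x ∂μ, ∀ᵐ y ∂μ,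
      ENNReal.ofReal |u x - u y| ^ p ≤ 2 ^ p * edist x y ^ (s * p) * (g x ^ p + g y ^ p) := by
  obtain ⟨-, N, hN, hgrad⟩ := hg
  have hNc : ∀ᵐ x ∂μ, x ∉ N := measure_eq_zero_iff_ae_notMem.1 hN
  filter_upwards [hNc] with x hx
  filter_upwards [hNc] with y hy
  calc ENNReal.ofReal |u x - u y| ^ p ≤ (edist x y ^ s * (g x + g y)) ^ p := by
        gcongr
        rw [edist_dist, ENNReal.ofReal_rpow_of_nonneg dist_nonneg hs]
        exact hgrad x hx y hy
    _ = edist x y ^ (s * p) * (g x + g y) ^ p := by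
        rw [ENNReal.mul_rpow_of_nonneg _ _ hp, ENNReal.rpow_mul]
    _ ≤ edist x y ^ (s * p) * (2 ^ p * (g x ^ p + g y ^ p)) := by
        gcongr
        exact ENNReal.add_rpow_le_two_rpow_mul_rpow_add_rpow _ _ hp
    _ = 2 ^ p * edist x y ^ (s * p) * (g x ^ p + g y ^ p) := by ring

lemma ofReal_abs_median_sub_median_rpow_le {μ : Measure X} {s p : ℝ} (hs : 0 ≤ s) (hp : 0 ≤ p)
    {u : X → ℝ} {g : X → ℝ≥0∞} (hu : Measurable u) (hg : IsSGradient μ s u g) {E F : Set X}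
    (hE : MeasurableSet E) (hE0 : μ E ≠ 0) (hEt : μ E ≠ ⊤)
    (hF : MeasurableSet F) (hF0 : μ F ≠ 0) (hFt : μ F ≠ ⊤) :
    ENNReal.ofReal |median μ u E - median μ u F| ^ p ≤
      2 * 2 ^ p * (⨆ x ∈ E, ⨆ y ∈ F, edist x y) ^ (s * p) *
        (⨍⁻ x in E, g x ^ p ∂μ + ⨍⁻ y in F, g y ^ p ∂μ) := by
  set D := ⨆ x ∈ E, ⨆ y ∈ F, edist x y
  set K := 2 ^ p * D ^ (s * p)
  obtain ⟨A, hAE, B, hBF, hA, hB, hEA, hFB, hsep⟩ :=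
    exists_subsets_abs_median_sub_le hu hE hE0 hEt hF hF0 hFt
  have hA0 : μ A ≠ 0 := ((ENNReal.half_pos hE0).trans_le hEA).ne'
  have hB0 : μ B ≠ 0 := ((ENNReal.half_pos hF0).trans_le hFB).ne'
  have hAt : μ A ≠ ⊤ := ne_top_of_le_ne_top hEt (measure_mono hAE)
  have hBt : μ B ≠ ⊤ := ne_top_of_le_ne_top hFt (measure_mono hBF)
  have hgp : Measurable fun x => g x ^ p := hg.1.pow_const p
  have hpt : ∀ᵐ x ∂μ.restrict A, ∀ᵐ y ∂μ.restrict B,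
      ENNReal.ofReal |median μ u E - median μ u F| ^ p ≤ K * g x ^ p + K * g y ^ p := by
    filter_upwards [ae_restrict_mem hA, ae_restrict_of_ae (hg.ae_ae_rpow_le hs hp)]
      with x hxA hx
    filter_upwards [ae_restrict_mem hB, ae_restrict_of_ae hx] with y hyB hy
    have hxyD : edist x y ≤ D :=
      le_iSup₂_of_le x (hAE hxA) (le_iSup₂_of_le y (hBF hyB) le_rfl)
    calc ENNReal.ofReal |median μ u E - median μ u F| ^ p
        ≤ ENNReal.ofReal |u x - u y| ^ p :=
          ENNReal.rpow_le_rpow (ENNReal.ofReal_le_ofReal (hsep x hxA y hyB)) hp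
      _ ≤ 2 ^ p * edist x y ^ (s * p) * (g x ^ p + g y ^ p) := hy
      _ ≤ 2 ^ p * D ^ (s * p) * (g x ^ p + g y ^ p) := by gcongr
      _ = K * g x ^ p + K * g y ^ p := mul_add _ _ _
  calc ENNReal.ofReal |median μ u E - median μ u F| ^ p
      ≤ ⨍⁻ x in A, K * g x ^ p ∂μ + ⨍⁻ y in B, K * g y ^ p ∂μ :=
        le_setLAverage_add_setLAverage hA0 hAt hB0 hBt hpt
    _ = K * (⨍⁻ x in A, g x ^ p ∂μ + ⨍⁻ y in B, g y ^ p ∂μ) := by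
        rw [laverage_const_mul hgp, laverage_const_mul hgp, mul_add]
    _ ≤ K * (2 * ⨍⁻ x in E, g x ^ p ∂μ + 2 * ⨍⁻ y in F, g y ^ p ∂μ) := by
        gcongr
        · exact setLAverage_le_two_mul_of_subset hAE hEA _
        · exact setLAverage_le_two_mul_of_subset hBF hFB _
    _ = 2 * 2 ^ p * D ^ (s * p) * (⨍⁻ x in E, g x ^ p ∂μ + ⨍⁻ y in F, g y ^ p ∂μ) := by
        ring

theorem statement2_general (μ : Measure X) (p : ℝ) (hp : 0 < p) :
    ∃ C : ℝ≥0∞, 0 < C ∧ C < ⊤ ∧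
      ∀ (s : ℝ), 0 < s → s ≤ 1 →
      ∀ (u : X → ℝ), Measurable u →
      ∀ (g : X → ℝ≥0∞), IsSGradient μ s u g →
      ∀ (E F : Set X), MeasurableSet E → MeasurableSet F →
        0 < μ E → μ E < ⊤ → 0 < μ F → μ F < ⊤ →
        ENNReal.ofReal |median μ u E - median μ u F| ^ p ≤
          C * (⨆ x ∈ E, ⨆ y ∈ F, edist x y) ^ (s * p) *
            ((∫⁻ x in E, g x ^ p ∂μ) / μ E + (∫⁻ y in F, g y ^ p ∂μ) / μ F) := by
  refine ⟨2 * 2 ^ p, by positivity, by finiteness,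
    fun s hs _ u hu g hg E F hE hF hE0 hEt hF0 hFt => ?_⟩
  simpa only [setLAverage_eq] using ofReal_abs_median_sub_median_rpow_le hs.le hp.le hu hg
    hE hE0.ne' hEt.ne hF hF0.ne' hFt.ne

/-- Lemma 3.4: a median oscillation estimate in terms of an
`s`-gradient, with a constant `C = C(p)` depending only on `p`. -/
theorem statement2 [BorelSpace X] (μ : Measure X) (p : ℝ) (hp : 0 < p) :
    ∃ C : ℝ≥0∞, 0 < C ∧ C < ⊤ ∧
      ∀ (s : ℝ), 0 < s → s ≤ 1 →
      ∀ (u : X → ℝ), Measurable u →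
      ∀ (g : X → ℝ≥0∞), IsSGradient μ s u g →
      ∀ (E F : Set X), MeasurableSet E → MeasurableSet F →
        0 < μ E → μ E < ⊤ → 0 < μ F → μ F < ⊤ →
        ENNReal.ofReal |median μ u E - median μ u F| ^ p ≤
          C * (⨆ x ∈ E, ⨆ y ∈ F, edist x y) ^ (s * p) *
            ((∫⁻ x in E, g x ^ p ∂μ) / μ E + (∫⁻ y in F, g y ^ p ∂μ) / μ F) :=
  statement2_general μ p hp

end Paper
end
end

section
/- Let 0 < s ≤ 1 and 0 < p < ∞. If u, v : X → ℝ are M^{s,p}-quasicontinuous functions with u = v μ-almost everywhere, then Cap_{M^{s,p}}({x ∈ X : u(x) ≠ v(x)}) = 0, i.e. u = v M^{s,p}-quasieverywhere. -/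
open MeasureTheory Metric Set Filter
open scoped ENNReal NNReal Topology

noncomputable section
namespace Paper

variable {X : Type*} [MetricSpace X] [MeasurableSpace X]

/-!
Off the open set `G = U₁ ∪ U₂`, where `Cap U₁` and `Cap U₂` are small and `u`, `v` are
continuous on the complements, the set `{u ≠ v}` is relatively open in `Gᶜ`. Hence
`{u ≠ v} ⊆ V ∪ G` for an open `V` with `V \ G ⊆ {u ≠ v}` a `μ`-null set. A test function
for `G`, redefined to be `1` on that null set, is a test function for `V ∪ G` with the same
norm, so `Cap {u ≠ v} ≤ Cap G ≲ Cap U₁ + Cap U₂`, which is arbitrarily small.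
-/

section Topology

variable {α β : Type*} [TopologicalSpace α] [TopologicalSpace β] [T2Space β]

lemma exists_isOpen_setOf_ne_subset_of_continuousOn_compl {f g : α → β} {G : Set α}
    (hG : IsOpen G) (hf : ContinuousOn f Gᶜ) (hg : ContinuousOn g Gᶜ) :
    ∃ W, IsOpen W ∧ {x | f x ≠ g x} ⊆ W ∧ W \ G ⊆ {x | f x ≠ g x} := by
  obtain ⟨V, hV, hVG⟩ := continuousOn_iff'.1 (hf.prodMk hg) _ isClosed_diagonal.isOpen_compl
  have hmem : ∀ x ∉ G, x ∈ V ↔ f x ≠ g x := fun x hx => by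
    simpa [hx] using (congrArg (x ∈ ·) hVG).to_iff.symm
  refine ⟨V ∪ G, hV.union hG, fun x hx => ?_, fun x ⟨hxW, hxG⟩ => ?_⟩
  · by_cases hxG : x ∈ G
    exacts [Or.inr hxG, Or.inl ((hmem x hxG).2 hx)]
  · exact (hmem x hxG).1 (hxW.resolve_right hxG)

end Topology

section Lp

variable {α : Type*} [MeasurableSpace α] {μ : Measure α} {p : ℝ} {u v : α → ℝ}
  {g h : α → ℝ≥0∞}

lemma max_rpow_le_rpow_add_rpow {a b : ℝ≥0∞} (hp : 0 ≤ p) :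
    max a b ^ p ≤ a ^ p + b ^ p := by
  rw [ENNReal.max_rpow hp]
  exact max_le le_self_add le_add_self

lemma lintegral_sup_rpow_le (hg : Measurable g) (hp : 0 ≤ p) :
    ∫⁻ x, (g ⊔ h) x ^ p ∂μ ≤ ∫⁻ x, g x ^ p ∂μ + ∫⁻ x, h x ^ p ∂μ :=
  (lintegral_mono fun _ => max_rpow_le_rpow_add_rpow hp).trans_eq
    (lintegral_add_left (hg.pow_const p) _)

lemma lpNormP_congr_ae (huv : u =ᵐ[μ] v) (F : Set α) : lpNormP μ p u F = lpNormP μ p v F :=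
  lintegral_congr_ae (ae_restrict_of_ae (huv.mono fun x hx => by simp only [hx]))

lemma lpNormP_sup_le (hu : Measurable u) (hp : 0 ≤ p) (F : Set α) :
    lpNormP μ p (u ⊔ v) F ≤ lpNormP μ p u F + lpNormP μ p v F := by
  refine le_trans (lintegral_mono fun x => ?_)
    (lintegral_sup_rpow_le (ENNReal.measurable_ofReal.comp hu.abs) hp)
  simp only [Pi.sup_apply, ← ENNReal.ofReal_max]
  gcongr
  exact abs_max_le_max_abs_abs

end Lp

section Capacity

variable {μ : Measure X} {s p : ℝ} {u v : X → ℝ} {g h : X → ℝ≥0∞} {E F : Set X}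

lemma IsSGradient.congr_ae (hg : IsSGradient μ s u g) (huv : u =ᵐ[μ] v) :
    IsSGradient μ s v g := by
  obtain ⟨hgm, N, hN, hgN⟩ := hg
  refine ⟨hgm, N ∪ {x | u x ≠ v x}, measure_union_null hN (ae_iff.1 huv),
    fun x hx y hy => ?_⟩
  obtain ⟨hxN, hxuv⟩ := not_or.1 hx
  obtain ⟨hyN, hyuv⟩ := not_or.1 hy
  rw [← not_not.1 hxuv, ← not_not.1 hyuv]
  exact hgN x hxN y hyN

lemma isSGradient_congr_ae (huv : u =ᵐ[μ] v) : IsSGradient μ s u g ↔ IsSGradient μ s v g :=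
  ⟨fun hg => hg.congr_ae huv, fun hg => hg.congr_ae huv.symm⟩

lemma IsSGradient.sup (hg : IsSGradient μ s u g) (hh : IsSGradient μ s v h) :
    IsSGradient μ s (u ⊔ v) (g ⊔ h) := by
  obtain ⟨hgm, N, hN, hgN⟩ := hg
  obtain ⟨hhm, M, hM, hhM⟩ := hh
  refine ⟨hgm.max hhm, N ∪ M, measure_union_null hN hM, fun x hx y hy => ?_⟩
  simp only [mem_union, not_or] at hx hy
  simp only [Pi.sup_apply]
  calc ENNReal.ofReal |max (u x) (v x) - max (u y) (v y)|
      ≤ max (ENNReal.ofReal |u x - u y|) (ENNReal.ofReal |v x - v y|) := by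
        rw [← ENNReal.ofReal_max]
        exact ENNReal.ofReal_le_ofReal (abs_max_sub_max_le_max _ _ _ _)
    _ ≤ ENNReal.ofReal (dist x y ^ s) * (max (g x) (h x) + max (g y) (h y)) := by
        refine max_le ((hgN x hx.1 y hy.1).trans ?_) ((hhM x hx.2 y hy.2).trans ?_) <;>
          gcongr <;> first | exact le_max_left _ _ | exact le_max_right _ _

lemma MemHomHajlasz.congr_ae (hu : MemHomHajlasz μ s p u) (hv : Measurable v)
    (huv : u =ᵐ[μ] v) : MemHomHajlasz μ s p v :=
  let ⟨_, g, hg, hgfin⟩ := hu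
  ⟨hv, g, hg.congr_ae huv, hgfin⟩

lemma MemHomHajlasz.sup (hu : MemHomHajlasz μ s p u) (hv : MemHomHajlasz μ s p v) (hp : 0 ≤ p) :
    MemHomHajlasz μ s p (u ⊔ v) := by
  obtain ⟨hum, g, hg, hgfin⟩ := hu
  obtain ⟨hvm, h, hh, hhfin⟩ := hv
  exact ⟨hum.max hvm, _, hg.sup hh,
    (lintegral_sup_rpow_le hg.1 hp).trans_lt (ENNReal.add_lt_top.2 ⟨hgfin, hhfin⟩)⟩

lemma hajlaszNorm_congr_ae (huv : u =ᵐ[μ] v) : hajlaszNorm μ s p u = hajlaszNorm μ s p v := by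
  simp only [hajlaszNorm, hajlaszSeminorm, lpNormP_congr_ae huv univ, isSGradient_congr_ae huv]

def hajlaszEnergy (μ : Measure X) (s p : ℝ) (u : X → ℝ) : ℝ≥0∞ :=
  ⨅ (g : X → ℝ≥0∞) (_ : IsSGradient μ s u g), ∫⁻ x, g x ^ p ∂μ

lemma hajlaszSeminorm_eq_hajlaszEnergy_rpow (hp : 0 < p) (u : X → ℝ) :
    hajlaszSeminorm μ s p u = hajlaszEnergy μ s p u ^ (1 / p) := by
  have h := (ENNReal.orderIsoRpow (1 / p) (one_div_pos.2 hp)).map_iInf₂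
    fun g (_ : IsSGradient μ s u g) => ∫⁻ x, g x ^ p ∂μ
  simpa only [hajlaszSeminorm, hajlaszEnergy, ENNReal.orderIsoRpow_apply] using h.symm

lemma hajlaszEnergy_sup_le (hp : 0 ≤ p) :
    hajlaszEnergy μ s p (u ⊔ v) ≤ hajlaszEnergy μ s p u + hajlaszEnergy μ s p v :=
  ENNReal.le_iInf₂_add_iInf₂ fun _ hg _ hh =>
    (iInf₂_le _ (hg.sup hh)).trans (lintegral_sup_rpow_le hg.1 hp)

lemma hajlaszNorm_rpow_le (hp : 0 < p) (u : X → ℝ) :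
    hajlaszNorm μ s p u ^ p ≤ 2 ^ p * (lpNormP μ p u univ + hajlaszEnergy μ s p u) := by
  rw [hajlaszNorm, hajlaszSeminorm_eq_hajlaszEnergy_rpow hp]
  refine (ENNReal.add_rpow_le_two_rpow_mul_rpow_add_rpow _ _ hp.le).trans_eq ?_
  simp only [one_div, ENNReal.rpow_inv_rpow hp.ne']

lemma lpNormP_add_hajlaszEnergy_le (hp : 0 < p) (u : X → ℝ) :
    lpNormP μ p u univ + hajlaszEnergy μ s p u ≤ 2 * hajlaszNorm μ s p u ^ p := by
  rw [two_mul, hajlaszNorm, hajlaszSeminorm_eq_hajlaszEnergy_rpow hp]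
  nth_rw 1 [← ENNReal.rpow_inv_rpow hp.ne' (lpNormP μ p u univ),
    ← ENNReal.rpow_inv_rpow hp.ne' (hajlaszEnergy μ s p u)]
  simp only [one_div]
  gcongr
  exacts [le_self_add, le_add_self]

lemma hajlaszNorm_sup_rpow_le (hu : Measurable u) (hp : 0 < p) :
    hajlaszNorm μ s p (u ⊔ v) ^ p ≤
      2 ^ (p + 1) * (hajlaszNorm μ s p u ^ p + hajlaszNorm μ s p v ^ p) :=
  calc hajlaszNorm μ s p (u ⊔ v) ^ p
      ≤ 2 ^ p * (lpNormP μ p (u ⊔ v) univ +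
          hajlaszEnergy μ s p (u ⊔ v)) := hajlaszNorm_rpow_le hp _
    _ ≤ 2 ^ p * ((lpNormP μ p u univ + hajlaszEnergy μ s p u) +
          (lpNormP μ p v univ + hajlaszEnergy μ s p v)) := by
        rw [add_add_add_comm]
        gcongr
        exacts [lpNormP_sup_le hu hp.le _, hajlaszEnergy_sup_le hp.le]
    _ ≤ 2 ^ p * (2 * hajlaszNorm μ s p u ^ p + 2 * hajlaszNorm μ s p v ^ p) := by
        gcongr <;> exact lpNormP_add_hajlaszEnergy_le hp _
    _ = 2 ^ (p + 1) * (hajlaszNorm μ s p u ^ p + hajlaszNorm μ s p v ^ p) := by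
        rw [ENNReal.rpow_add _ _ two_ne_zero ENNReal.ofNat_ne_top, ENNReal.rpow_one, ← mul_add,
          mul_assoc]

def IsHajlaszCapTest (μ : Measure X) (s p : ℝ) (E : Set X) (u : X → ℝ) : Prop :=
  MemHomHajlasz μ s p u ∧ lpNormP μ p u Set.univ < ⊤ ∧
    ∃ U : Set X, IsOpen U ∧ E ⊆ U ∧ ∀ x ∈ U, 1 ≤ u x

lemma hajlaszCapacity_eq_iInf (E : Set X) :
    hajlaszCapacity μ s p E =
      ⨅ (u) (_ : IsHajlaszCapTest μ s p E u), hajlaszNorm μ s p u ^ p :=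
  rfl

lemma hajlaszCapacity_le (hu : IsHajlaszCapTest μ s p E u) :
    hajlaszCapacity μ s p E ≤ hajlaszNorm μ s p u ^ p :=
  iInf₂_le u hu

lemma IsHajlaszCapTest.mono (hu : IsHajlaszCapTest μ s p F u) (hEF : E ⊆ F) :
    IsHajlaszCapTest μ s p E u :=
  let ⟨hmem, hfin, U, hUo, hFU, hU1⟩ := hu
  ⟨hmem, hfin, U, hUo, hEF.trans hFU, hU1⟩

lemma hajlaszCapacity_mono (hEF : E ⊆ F) :
    hajlaszCapacity μ s p E ≤ hajlaszCapacity μ s p F :=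
  iInf₂_mono' fun u (hu : IsHajlaszCapTest μ s p F u) => ⟨u, hu.mono hEF, le_rfl⟩

lemma IsHajlaszCapTest.sup (hu : IsHajlaszCapTest μ s p E u) (hv : IsHajlaszCapTest μ s p F v)
    (hp : 0 ≤ p) : IsHajlaszCapTest μ s p (E ∪ F) (u ⊔ v) := by
  obtain ⟨humem, hufin, U, hUo, hEU, hU1⟩ := hu
  obtain ⟨hvmem, hvfin, V, hVo, hFV, hV1⟩ := hv
  refine ⟨humem.sup hvmem hp,
    (lpNormP_sup_le humem.1 hp _).trans_lt (ENNReal.add_lt_top.2 ⟨hufin, hvfin⟩),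
    U ∪ V, hUo.union hVo, union_subset_union hEU hFV, ?_⟩
  rintro x (hx | hx)
  · exact (hU1 x hx).trans (le_max_left _ _)
  · exact (hV1 x hx).trans (le_max_right _ _)

lemma hajlaszCapacity_union_le (hp : 0 < p) (E F : Set X) :
    hajlaszCapacity μ s p (E ∪ F) ≤
      2 ^ (p + 1) * (hajlaszCapacity μ s p E + hajlaszCapacity μ s p F) := by
  have hc : (2 : ℝ≥0∞) ^ (p + 1) ≠ ⊤ :=
    ENNReal.rpow_ne_top_of_nonneg (by positivity) (by simp)
  rw [mul_comm, ← ENNReal.div_le_iff (by positivity) hc, hajlaszCapacity_eq_iInf,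
    hajlaszCapacity_eq_iInf]
  exact ENNReal.le_iInf₂_add_iInf₂ fun u hu v hv => ENNReal.div_le_of_le_mul' <|
    (hajlaszCapacity_le (hu.sup hv hp.le)).trans (hajlaszNorm_sup_rpow_le hu.1.1 hp)

lemma exists_isOpen_hajlaszCapacity_lt {c : ℝ≥0∞} (hE : hajlaszCapacity μ s p E < c) :
    ∃ U, IsOpen U ∧ E ⊆ U ∧ hajlaszCapacity μ s p U < c := by
  rw [hajlaszCapacity_eq_iInf] at hE
  simp only [iInf_lt_iff] at hE
  obtain ⟨u, ⟨hmem, hfin, U, hUo, hEU, hU1⟩, hlt⟩ := hE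
  exact ⟨U, hUo, hEU,
    (hajlaszCapacity_le ⟨hmem, hfin, U, hUo, subset_rfl, hU1⟩).trans_lt hlt⟩

lemma _root_.IsOpen.hajlaszCapacity_le_of_measure_diff_eq_zero {W G : Set X} (hW : IsOpen W)
    (hWG : μ (W \ G) = 0) : hajlaszCapacity μ s p W ≤ hajlaszCapacity μ s p G := by
  classical
  rw [hajlaszCapacity_eq_iInf, hajlaszCapacity_eq_iInf]
  refine le_iInf₂ fun u ⟨humem, hufin, U, hUo, hGU, hU1⟩ => ?_
  set N := toMeasurable μ (W \ U)
  have hN : μ N = 0 := by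
    rw [measure_toMeasurable]
    exact measure_mono_null (sdiff_subset_sdiff_right hGU) hWG
  set ψ : X → ℝ := N.piecewise 1 u
  have hψu : ψ =ᵐ[μ] u :=
    (measure_eq_zero_iff_ae_notMem.1 hN).mono fun x hx => piecewise_eq_of_notMem _ _ _ hx
  have hψ1 : ∀ x ∈ W ∪ U, 1 ≤ ψ x := by
    intro x hx
    by_cases hxN : x ∈ N
    · simp [ψ, hxN]
    · have hxU : x ∈ U := by
        by_contra hxU
        exact hxN (subset_toMeasurable μ _ ⟨hx.resolve_right hxU, hxU⟩)
      simpa [ψ, hxN] using hU1 x hxU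
  refine iInf₂_le_of_le ψ ⟨humem.congr_ae (measurable_const.piecewise
      (measurableSet_toMeasurable μ _) humem.1) hψu.symm, ?_, W ∪ U, hW.union hUo,
      subset_union_left, hψ1⟩ (by rw [hajlaszNorm_congr_ae hψu])
  rwa [lpNormP_congr_ae hψu]

lemma HajlaszQC.exists_isOpen (hu : HajlaszQC μ s p u) {ε : ℝ≥0∞} (hε : 0 < ε) :
    ∃ U, IsOpen U ∧ hajlaszCapacity μ s p U < ε ∧ ContinuousOn u Uᶜ := by
  obtain ⟨r, -, hr0, hrε⟩ := ENNReal.lt_iff_exists_real_btwn.1 hε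
  obtain ⟨E, hE, hcont⟩ := hu r (ENNReal.ofReal_pos.1 hr0)
  obtain ⟨U, hUo, hEU, hU⟩ := exists_isOpen_hajlaszCapacity_lt hE
  exact ⟨U, hUo, hU.trans hrε, hcont.mono (compl_subset_compl.2 hEU)⟩

end Capacity

theorem statement4_general
    (μ : Measure X)
    (s p : ℝ) (hp : 0 < p)
    (u v : X → ℝ)
    (huqc : HajlaszQC μ s p u) (hvqc : HajlaszQC μ s p v)
    (hae : u =ᵐ[μ] v) :
    hajlaszCapacity μ s p {x : X | u x ≠ v x} = 0 := by
  have key : ∀ ε > 0, hajlaszCapacity μ s p {x | u x ≠ v x} ≤ 2 ^ (p + 1) * (ε + ε) := by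
    intro ε hε
    obtain ⟨U₁, hU₁, hcap₁, hu⟩ := huqc.exists_isOpen hε
    obtain ⟨U₂, hU₂, hcap₂, hv⟩ := hvqc.exists_isOpen hε
    obtain ⟨W, hW, hsub, hWG⟩ := exists_isOpen_setOf_ne_subset_of_continuousOn_compl
      (hU₁.union hU₂) (hu.mono (by simp)) (hv.mono (by simp))
    calc hajlaszCapacity μ s p {x | u x ≠ v x}
        ≤ hajlaszCapacity μ s p W := hajlaszCapacity_mono hsub
      _ ≤ hajlaszCapacity μ s p (U₁ ∪ U₂) :=
          hW.hajlaszCapacity_le_of_measure_diff_eq_zero (measure_mono_null hWG (ae_iff.1 hae))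
      _ ≤ 2 ^ (p + 1) * (hajlaszCapacity μ s p U₁ + hajlaszCapacity μ s p U₂) :=
          hajlaszCapacity_union_le hp _ _
      _ ≤ 2 ^ (p + 1) * (ε + ε) := by gcongr
  have hlim : Tendsto
      (fun n : ℕ => (2 : ℝ≥0∞) ^ (p + 1) * ((n : ℝ≥0∞)⁻¹ + (n : ℝ≥0∞)⁻¹)) atTop (𝓝 0) := by
    simpa using ENNReal.Tendsto.const_mul
      (ENNReal.tendsto_inv_nat_nhds_zero.add ENNReal.tendsto_inv_nat_nhds_zero)
      (Or.inr (ENNReal.rpow_ne_top_of_nonneg (by positivity) (by simp)))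
  exact nonpos_iff_eq_zero.1 <| ge_of_tendsto' hlim fun n =>
    key _ (ENNReal.inv_pos.2 (ENNReal.natCast_ne_top n))

/-- Lemma 4.8: two `M^{s,p}`-quasicontinuous functions agreeing
`μ`-a.e. agree `M^{s,p}`-quasieverywhere. -/
theorem statement4 [BorelSpace X]
    (μ : Measure X) (hcomp : μ.IsComplete)
    (hball : ∀ (x : X) (r : ℝ), 0 < r → 0 < μ (ball x r) ∧ μ (ball x r) < ⊤)
    (hdiam : EMetric.diam (Set.univ : Set X) = ⊤)
    (cμ : ℝ) (hcμ : 1 ≤ cμ)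
    (hdoub : ∀ (x : X) (r : ℝ), 0 < r → μ (ball x (2 * r)) ≤ ENNReal.ofReal cμ * μ (ball x r))
    (cR κ : ℝ) (hcR0 : 0 < cR) (hcR1 : cR < 1) (hκ : 1 < κ)
    (hrev : ∀ (x : X) (r : ℝ), 0 < r → μ (ball x r) ≤ ENNReal.ofReal cR * μ (ball x (κ * r)))
    (s p : ℝ) (hs0 : 0 < s) (hs1 : s ≤ 1) (hp : 0 < p)
    (u v : X → ℝ) (hu : Measurable u) (hv : Measurable v)
    (huqc : HajlaszQC μ s p u) (hvqc : HajlaszQC μ s p v)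
    (hae : u =ᵐ[μ] v) :
    hajlaszCapacity μ s p {x : X | u x ≠ v x} = 0 :=
  statement4_general μ s p hp u v huqc hvqc hae

end Paper
end
end

section
/- Let 0 < p < ∞ and let u ∈ L^p(X) be measurable and finite μ-a.e. Then for every O ∈ X, lim_{j→∞} m_u(A_{κ^j}(O)) = 0. -/
open MeasureTheory Metric Set Filter
open scoped ENNReal NNReal Topology

noncomputable section
namespace Paper

variable {X : Type*} [MetricSpace X] [MeasurableSpace X]

/-! By Chebyshev's inequality the set `{|u| > ε}` has finite measure, so the part of it outside
`B(O, κ^j)` has measure tending to `0`. Reverse doubling keeps `μ(A_{κ^j}(O))` above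
`(1 - c_R) μ(B(O, 1)) > 0`, so eventually `|u| > ε` on less than half of the annulus, which
forces `|m_u(A_{κ^j}(O))| ≤ ε`. -/

lemma abs_median_le {α : Type*} [MeasurableSpace α] (μ : Measure α) (u : α → ℝ) (E : Set α)
    {ε : ℝ} (h : μ {x | x ∈ E ∧ ε < |u x|} < μ E / 2) :
    |median μ u E| ≤ ε := by
  set S := {a : ℝ | μ {x | x ∈ E ∧ a < u x} < μ E / 2}
  have hεS : ε ∈ S := (measure_mono fun x (hx : x ∈ E ∧ ε < u x) =>
    (⟨hx.1, hx.2.trans_le (le_abs_self _)⟩ : x ∈ E ∧ ε < |u x|)).trans_lt h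
  -- below `-ε`, the sets `{a < u}` and `{ε < |u|}` would cover `E` with less than its measure
  have hlb : ∀ a ∈ S, -ε ≤ a := by
    intro a ha
    by_contra! hlt
    have hcover : E ⊆ {x | x ∈ E ∧ a < u x} ∪ {x | x ∈ E ∧ ε < |u x|} := fun x hx => by
      rcases lt_or_ge ε |u x| with h1 | h1
      · exact Or.inr ⟨hx, h1⟩
      · exact Or.inl ⟨hx, hlt.trans_le (neg_le_of_abs_le h1)⟩
    refine (measure_mono (μ := μ) hcover).not_gt ?_
    calc μ ({x | x ∈ E ∧ a < u x} ∪ {x | x ∈ E ∧ ε < |u x|})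
        ≤ μ {x | x ∈ E ∧ a < u x} + μ {x | x ∈ E ∧ ε < |u x|} := measure_union_le _ _
      _ < μ E / 2 + μ E / 2 := ENNReal.add_lt_add_of_lt_of_le h.ne_top ha h.le
      _ = μ E := ENNReal.add_halves _
  exact abs_le.2 ⟨le_csInf ⟨ε, hεS⟩ hlb, csInf_le ⟨-ε, hlb⟩ hεS⟩

lemma measure_abs_gt_lt_top {α : Type*} [MeasurableSpace α] (μ : Measure α) {p ε : ℝ}
    (hp : 0 < p) (hε : 0 < ε) {u : α → ℝ} (hu : Measurable u) (huLp : lpNormP μ p u univ < ⊤) :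
    μ {x | ε < |u x|} < ⊤ := by
  have hεp : ENNReal.ofReal ε ^ p ≠ 0 := by positivity
  calc μ {x | ε < |u x|} ≤ μ {x | ENNReal.ofReal ε ^ p ≤ ENNReal.ofReal |u x| ^ p} :=
        measure_mono fun x hx => ENNReal.rpow_le_rpow (ENNReal.ofReal_le_ofReal hx.le) hp.le
    _ ≤ lpNormP μ p u univ / ENNReal.ofReal ε ^ p := by
        rw [lpNormP, Measure.restrict_univ]
        exact meas_ge_le_lintegral_div
          ((ENNReal.measurable_ofReal.comp hu.abs).pow_const p).aemeasurable hεp (by simp [hp.le])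
    _ < ⊤ := ENNReal.div_lt_top huLp.ne hεp

lemma tendsto_measure_diff_ball_atTop (μ : Measure X) [OpensMeasurableSpace X] {s : Set X}
    (hs : μ s ≠ ⊤) (O : X) :
    Tendsto (fun r : ℝ => μ (s \ ball O r)) atTop (𝓝 0) := by
  have hempty : ⋂ r : ℝ, (ball O r)ᶜ = ∅ :=
    eq_empty_of_forall_notMem fun (x : X) hx =>
      mem_iInter.1 hx (dist x O + 1) (by rw [mem_ball]; linarith)
  have h := tendsto_measure_iInter_atTop (μ := μ.restrict s) (s := fun r : ℝ => (ball O r)ᶜ)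
    (fun _ => measurableSet_ball.compl.nullMeasurableSet)
    (fun _ _ hrr' => compl_subset_compl.2 (ball_subset_ball hrr'))
    ⟨0, by
      rw [Measure.restrict_apply measurableSet_ball.compl]
      exact measure_ne_top_of_subset inter_subset_right hs⟩
  rw [hempty, measure_empty] at h
  refine h.congr fun r => ?_
  rw [Function.comp_apply, Measure.restrict_apply measurableSet_ball.compl, sdiff_eq, inter_comm]

lemma one_sub_mul_measure_ball_le_measure_ann (μ : Measure X) [OpensMeasurableSpace X]
    {c κ r : ℝ} (hκ : 1 ≤ κ) (hr : 0 ≤ r) (O : X) (hfin : μ (ball O (κ * r)) ≠ ⊤)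
    (hrev : μ (ball O r) ≤ ENNReal.ofReal c * μ (ball O (κ * r))) :
    (1 - ENNReal.ofReal c) * μ (ball O (κ * r)) ≤ μ (ann κ O r) := by
  have hsub : ball O r ⊆ ball O (κ * r) := ball_subset_ball (le_mul_of_one_le_left hr hκ)
  rw [ann, measure_sdiff hsub measurableSet_ball.nullMeasurableSet
    (measure_ne_top_of_subset hsub hfin), ENNReal.sub_mul fun _ _ => hfin, one_mul]
  exact tsub_le_tsub_left hrev _

theorem statement5_general [BorelSpace X]
    (μ : Measure X)
    (hball : ∀ (x : X) (r : ℝ), 0 < r → 0 < μ (ball x r) ∧ μ (ball x r) < ⊤)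
    (cR κ : ℝ) (hcR1 : cR < 1) (hκ : 1 < κ)
    (hrev : ∀ (x : X) (r : ℝ), 0 < r → μ (ball x r) ≤ ENNReal.ofReal cR * μ (ball x (κ * r)))
    (p : ℝ) (hp : 0 < p)
    (u : X → ℝ) (hu : Measurable u) (huLp : lpNormP μ p u Set.univ < ⊤)
    (O : X) :
    Tendsto (fun j : ℕ => median μ u (ann κ O (κ ^ j))) atTop (𝓝 0) := by
  set δ := (1 - ENNReal.ofReal cR) * μ (ball O 1)
  have hδ : 0 < δ / 2 := ENNReal.half_pos (ENNReal.mul_pos (tsub_pos_of_lt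
    (ENNReal.ofReal_lt_one.2 hcR1)).ne' (hball O 1 one_pos).1.ne').ne'
  have hann : ∀ j : ℕ, δ ≤ μ (ann κ O (κ ^ j)) := fun j => by
    have hr : 0 < κ ^ j := pow_pos (by linarith) j
    have hκr : 1 ≤ κ * κ ^ j := by rw [← pow_succ']; exact one_le_pow₀ hκ.le
    exact (mul_le_mul_right (measure_mono (ball_subset_ball hκr)) _).trans
      (one_sub_mul_measure_ball_le_measure_ann μ hκ.le hr.le O
        (hball O _ (by linarith)).2.ne (hrev O _ hr))
  refine Metric.tendsto_nhds.2 fun ε hε => ?_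
  have htail := (tendsto_measure_diff_ball_atTop μ
    (measure_abs_gt_lt_top μ hp (half_pos hε) hu huLp).ne O).comp
    (tendsto_pow_atTop_atTop_of_one_lt hκ)
  filter_upwards [htail.eventually (gt_mem_nhds hδ)] with j hj
  rw [Real.dist_eq, sub_zero]
  refine (abs_median_le μ u _ ?_).trans_lt (half_lt_self hε)
  calc μ {x | x ∈ ann κ O (κ ^ j) ∧ ε / 2 < |u x|}
      ≤ μ ({x | ε / 2 < |u x|} \ ball O (κ ^ j)) := measure_mono fun x hx => ⟨hx.2, hx.1.2⟩
    _ < δ / 2 := hj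
    _ ≤ μ (ann κ O (κ ^ j)) / 2 := ENNReal.div_le_div_right (hann j) 2

/-- Lemma 5.1: for `u ∈ L^p(X)`, the medians over the annuli
`A_{κ^j}(O)` tend to `0` as `j → ∞`, for every basepoint `O`. -/
theorem statement5 [BorelSpace X]
    (μ : Measure X) (hcomp : μ.IsComplete)
    (hball : ∀ (x : X) (r : ℝ), 0 < r → 0 < μ (ball x r) ∧ μ (ball x r) < ⊤)
    (hdiam : EMetric.diam (Set.univ : Set X) = ⊤)
    (cμ : ℝ) (hcμ : 1 ≤ cμ)
    (hdoub : ∀ (x : X) (r : ℝ), 0 < r → μ (ball x (2 * r)) ≤ ENNReal.ofReal cμ * μ (ball x r))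
    (cR κ : ℝ) (hcR0 : 0 < cR) (hcR1 : cR < 1) (hκ : 1 < κ)
    (hrev : ∀ (x : X) (r : ℝ), 0 < r → μ (ball x r) ≤ ENNReal.ofReal cR * μ (ball x (κ * r)))
    (p : ℝ) (hp : 0 < p)
    (u : X → ℝ) (hu : Measurable u) (huLp : lpNormP μ p u Set.univ < ⊤)
    (O : X) :
    Tendsto (fun j : ℕ => median μ u (ann κ O (κ ^ j))) atTop (𝓝 0) :=
  statement5_general μ hball cR κ hcR1 hκ hrev p hp u hu huLp O

end Paper
end
end

section
/- Let 0 < s ≤ 1 and 0 < p < ∞ satisfy sp < σ, where σ is an exponent from the iterated reverse doubling condition. Let u ∈ Ṁ^{s,p}(X). Then there exists a constant c ∈ ℝ such that for every O ∈ X, lim_{j→∞} m_u(A_{κ^j}(O)) = c; in particular the limit exists and is independent of the basepoint O. -/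
open MeasureTheory Metric Set Filter
open scoped ENNReal NNReal Topology

noncomputable section
namespace Paper

variable {X : Type*} [MetricSpace X] [MeasurableSpace X]

/-! If `g` is an `s`-gradient of `u`, the medians of `u` on two sets of measure at least `M`
inside a ball `B(z, R)` differ by at most `C R^s (∫ g^p / M)^{1/p}`: each set keeps half of its
measure on the side of its median facing the other median, across these two halves `u` jumps by
a third of the gap, so `g` is large on one of them.
By reverse doubling, `μ(A_r(O)) ≳ r^σ` as soon as `d(O, O₀) ≲ r`. At scale `r = κ^j`, both
consecutive medians along `A_{κ^j}(O₀)` and the medians for two basepoints therefore differ by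
`O(κ^{j(s - σ/p)})`, a geometric sequence because `sp < σ`. -/

lemma measurableSet_ann [OpensMeasurableSpace X] {κ r : ℝ} {O : X} :
    MeasurableSet (ann κ O r) :=
  measurableSet_ball.diff measurableSet_ball

section Median

variable {Ω : Type*} [MeasurableSpace Ω] {μ : Measure Ω} {u : Ω → ℝ} {E : Set Ω}

lemma bddBelow_setOf_measure_lt_half (h0 : μ E ≠ 0) (hfin : μ E ≠ ⊤) :
    BddBelow {a : ℝ | μ {x | x ∈ E ∧ a < u x} < μ E / 2} := by
  set S : ℕ → Set Ω := fun n => {x | x ∈ E ∧ -(n : ℝ) < u x}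
  have hS : Monotone S := fun m n hmn x hx =>
    ⟨hx.1, (neg_le_neg (Nat.cast_le.2 hmn)).trans_lt hx.2⟩
  have hSE : ⋃ n, S n = E := by
    ext x
    simpa [S] using fun _ => (exists_nat_gt (-u x)).imp fun n hn => by linarith
  have hE := tendsto_measure_iUnion_atTop (μ := μ) hS
  rw [hSE] at hE
  obtain ⟨n, hn⟩ := (hE.eventually (Ioi_mem_nhds (ENNReal.half_lt_self h0 hfin))).exists
  refine ⟨-(n : ℝ), fun a ha => le_of_not_gt fun han => ?_⟩
  exact (hn.trans_le (measure_mono (s := S n) fun x hx =>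
    (⟨hx.1, han.trans hx.2⟩ : x ∈ E ∧ a < u x))).not_gt ha

lemma nonempty_setOf_measure_lt_half (hu : Measurable u) (hE : MeasurableSet E)
    (h0 : μ E ≠ 0) (hfin : μ E ≠ ⊤) :
    {a : ℝ | μ {x | x ∈ E ∧ a < u x} < μ E / 2}.Nonempty := by
  set S : ℕ → Set Ω := fun n => {x | x ∈ E ∧ (n : ℝ) < u x}
  have hS : Antitone S := fun m n hmn x hx => ⟨hx.1, (Nat.cast_le.2 hmn).trans_lt hx.2⟩
  have hSm : ∀ n, NullMeasurableSet (S n) μ := fun n =>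
    (hE.inter (hu measurableSet_Ioi)).nullMeasurableSet
  have hS0 : ⋂ n, S n = ∅ := by
    ext x
    simpa [S] using (exists_nat_ge (u x)).imp fun n hn _ => hn
  have hE := tendsto_measure_iInter_atTop hSm hS
    ⟨0, ne_top_of_le_ne_top hfin (measure_mono fun x hx => hx.1)⟩
  rw [hS0, measure_empty] at hE
  obtain ⟨n, hn⟩ := (hE.eventually (Iio_mem_nhds (ENNReal.half_pos h0))).exists
  exact ⟨n, hn⟩

lemma half_measure_le_of_median_lt (hu : Measurable u) (hE : MeasurableSet E) (h0 : μ E ≠ 0)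
    (hfin : μ E ≠ ⊤) {a : ℝ} (ha : median μ u E < a) :
    μ E / 2 ≤ μ {x | x ∈ E ∧ u x ≤ a} := by
  obtain ⟨b, hb, hba⟩ := (csInf_lt_iff (bddBelow_setOf_measure_lt_half h0 hfin)
    (nonempty_setOf_measure_lt_half hu hE h0 hfin)).1 ha
  have hgt : μ {x | x ∈ E ∧ a < u x} < μ E / 2 :=
    (measure_mono fun x (hx : x ∈ E ∧ a < u x) =>
      (⟨hx.1, hba.trans hx.2⟩ : x ∈ E ∧ b < u x)).trans_lt hb
  refine le_of_not_gt fun hle => (ENNReal.add_halves (μ E)).not_gt ?_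
  calc μ E ≤ μ ({x | x ∈ E ∧ u x ≤ a} ∪ {x | x ∈ E ∧ a < u x}) :=
        measure_mono fun x hx => (le_or_gt (u x) a).imp (⟨hx, ·⟩) (⟨hx, ·⟩)
    _ ≤ μ {x | x ∈ E ∧ u x ≤ a} + μ {x | x ∈ E ∧ a < u x} := measure_union_le _ _
    _ < μ E / 2 + μ E / 2 := ENNReal.add_lt_add hle hgt

lemma half_measure_le_of_lt_median (h0 : μ E ≠ 0) (hfin : μ E ≠ ⊤) {a : ℝ}
    (ha : a < median μ u E) : μ E / 2 ≤ μ {x | x ∈ E ∧ a < u x} :=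
  le_of_not_gt fun h => (csInf_le (bddBelow_setOf_measure_lt_half h0 hfin) h).not_gt ha

end Median

lemma mul_rpow_mul_div_rpow_inv {a b r : ℝ} (ha : 0 ≤ a) (hb : 0 ≤ b) (hr : 0 < r)
    (s σ p : ℝ) : (a * r) ^ s * (b / r ^ σ) ^ p⁻¹ = a ^ s * b ^ p⁻¹ * r ^ (s - σ / p) := by
  rw [Real.mul_rpow ha hr.le, Real.div_rpow hb (by positivity), ← Real.rpow_mul hr.le,
    Real.rpow_sub hr, div_eq_mul_inv σ p]
  ring

section Gradient

variable {μ : Measure X} {s p : ℝ} {u : X → ℝ} {g : X → ℝ≥0∞} {z : X} {R : ℝ}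
  {E₁ E₂ : Set X}

lemma half_min_measure_le_of_median_lt (hu : Measurable u) (hg : IsSGradient μ s u g)
    (hs : 0 ≤ s) (hE₁ : MeasurableSet E₁)
    (hE₁z : E₁ ⊆ ball z R) (hE₂z : E₂ ⊆ ball z R) (h₁ : μ E₁ ≠ 0) (h₂ : μ E₂ ≠ 0)
    (hf₁ : μ E₁ ≠ ⊤) (hf₂ : μ E₂ ≠ ⊤) (hlt : median μ u E₁ < median μ u E₂) :
    min (μ E₁) (μ E₂) / 2 ≤
      μ {x | ENNReal.ofReal ((median μ u E₂ - median μ u E₁) / (6 * (2 * R) ^ s)) ≤ g x} := by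
  obtain ⟨-, N, hN, hgrad⟩ := hg
  set t := median μ u E₂ - median μ u E₁
  set τ := ENNReal.ofReal (t / (6 * (2 * R) ^ s))
  set S₁ := {x | x ∈ E₁ ∧ u x ≤ median μ u E₁ + t / 3}
  set S₂ := {x | x ∈ E₂ ∧ median μ u E₂ - t / 3 < u x}
  have ht : 0 < t := sub_pos.2 hlt
  have hpair : ∀ x ∈ S₁ \ N, ∀ y ∈ S₂ \ N, τ ≤ g x ∨ τ ≤ g y := by
    rintro x ⟨hx, hxN⟩ y ⟨hy, hyN⟩
    have hxz := mem_ball.1 (hE₁z hx.1)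
    have hyz := mem_ball'.1 (hE₂z hy.1)
    have hRs : 0 < (2 * R) ^ s :=
      Real.rpow_pos_of_pos (by linarith [dist_nonneg (x := x) (y := z)]) s
    have hjump :
        ENNReal.ofReal ((2 * R) ^ s) * (2 * τ) ≤ ENNReal.ofReal ((2 * R) ^ s) * (g x + g y) :=
      calc ENNReal.ofReal ((2 * R) ^ s) * (2 * τ) = ENNReal.ofReal (t / 3) := by
            rw [← ENNReal.ofReal_ofNat, ← ENNReal.ofReal_mul zero_le_two,
              ← ENNReal.ofReal_mul hRs.le]
            congr 1
            field_simp
            ring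
        _ ≤ ENNReal.ofReal |u x - u y| :=
            ENNReal.ofReal_le_ofReal ((neg_le_abs _).trans' (by linarith [hx.2, hy.2]))
        _ ≤ ENNReal.ofReal (dist x y ^ s) * (g x + g y) := hgrad x hxN y hyN
        _ ≤ ENNReal.ofReal ((2 * R) ^ s) * (g x + g y) := by
            gcongr
            exact (dist_triangle x z y).trans (by linarith)
    rw [ENNReal.mul_le_mul_iff_right (by simpa using hRs) ENNReal.ofReal_ne_top, two_mul] at hjump
    by_contra! hτ
    exact (ENNReal.add_lt_add hτ.1 hτ.2).not_ge hjump
  have hS₁ : min (μ E₁) (μ E₂) / 2 ≤ μ (S₁ \ N) := by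
    rw [measure_sdiff_null hN]
    exact (ENNReal.div_le_div_right (min_le_left _ _) 2).trans
      (half_measure_le_of_median_lt hu hE₁ h₁ hf₁ (by linarith))
  have hS₂ : min (μ E₁) (μ E₂) / 2 ≤ μ (S₂ \ N) := by
    rw [measure_sdiff_null hN]
    exact (ENNReal.div_le_div_right (min_le_right _ _) 2).trans
      (half_measure_le_of_lt_median h₂ hf₂ (by linarith))
  by_cases h : S₁ \ N ⊆ {x | τ ≤ g x}
  · exact hS₁.trans (measure_mono h)
  · obtain ⟨x, hx, hτx⟩ := not_subset.1 h
    exact hS₂.trans (measure_mono fun y hy => (hpair x hx y hy).resolve_left hτx)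

lemma median_sub_median_le (hu : Measurable u) (hg : IsSGradient μ s u g) (hs : 0 ≤ s)
    (hp : 0 < p) (hgp : ∫⁻ x, g x ^ p ∂μ ≠ ⊤) (hR : μ (ball z R) ≠ ⊤) (hE₁ : MeasurableSet E₁)
    (hE₁z : E₁ ⊆ ball z R) (hE₂z : E₂ ⊆ ball z R) {M : ℝ} (hM : 0 < M)
    (hM₁ : ENNReal.ofReal M ≤ μ E₁) (hM₂ : ENNReal.ofReal M ≤ μ E₂) :
    median μ u E₂ - median μ u E₁ ≤
      6 * (2 * R) ^ s * (2 * (∫⁻ x, g x ^ p ∂μ).toReal / M) ^ p⁻¹ := by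
  set L := (∫⁻ x, g x ^ p ∂μ).toReal
  set t := median μ u E₂ - median μ u E₁
  set D := 6 * (2 * R) ^ s
  have h₁ : μ E₁ ≠ 0 := (ENNReal.ofReal_pos.2 hM).trans_le hM₁ |>.ne'
  have h₂ : μ E₂ ≠ 0 := (ENNReal.ofReal_pos.2 hM).trans_le hM₂ |>.ne'
  obtain ⟨x, hx⟩ := nonempty_of_measure_ne_zero h₁
  have hR0 : 0 < R := dist_nonneg.trans_lt (mem_ball.1 (hE₁z hx))
  have hD : 0 < D := mul_pos (by norm_num) (Real.rpow_pos_of_pos (by linarith) s)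
  rcases le_or_gt t 0 with ht | ht
  · exact ht.trans (mul_nonneg hD.le (by positivity))
  have hlevel := half_min_measure_le_of_median_lt hu hg hs hE₁ hE₁z hE₂z h₁ h₂
    (ne_top_of_le_ne_top hR (measure_mono hE₁z)) (ne_top_of_le_ne_top hR (measure_mono hE₂z))
    (sub_pos.1 ht)
  have hmarkov : (t / D) ^ p * (M / 2) ≤ L := by
    rw [← ENNReal.ofReal_le_ofReal_iff ENNReal.toReal_nonneg, ENNReal.ofReal_toReal hgp,
      ENNReal.ofReal_mul (by positivity), ← ENNReal.ofReal_rpow_of_nonneg (by positivity) hp.le,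
      ENNReal.ofReal_div_of_pos two_pos, ENNReal.ofReal_ofNat]
    calc ENNReal.ofReal (t / D) ^ p * (ENNReal.ofReal M / 2)
        ≤ ENNReal.ofReal (t / D) ^ p * μ {x | ENNReal.ofReal (t / D) ^ p ≤ g x ^ p} := by
          gcongr
          refine (ENNReal.div_le_div_right (le_min hM₁ hM₂) 2).trans (hlevel.trans ?_)
          exact measure_mono fun x hx => ENNReal.rpow_le_rpow hx hp.le
      _ ≤ ∫⁻ x, g x ^ p ∂μ := mul_meas_ge_le_lintegral₀ (hg.1.pow_const p).aemeasurable _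
  have htD : t / D ≤ (2 * L / M) ^ p⁻¹ := by
    rw [← Real.rpow_rpow_inv (by positivity : 0 ≤ t / D) hp.ne']
    refine Real.rpow_le_rpow (by positivity) ?_ (inv_nonneg.2 hp.le)
    rw [le_div_iff₀ hM]
    linarith
  rwa [div_le_iff₀' hD] at htD

lemma abs_median_sub_median_le (hu : Measurable u) (hg : IsSGradient μ s u g) (hs : 0 ≤ s)
    (hp : 0 < p) (hgp : ∫⁻ x, g x ^ p ∂μ ≠ ⊤) (hR : μ (ball z R) ≠ ⊤) (hE₁ : MeasurableSet E₁)
    (hE₂ : MeasurableSet E₂) (hE₁z : E₁ ⊆ ball z R) (hE₂z : E₂ ⊆ ball z R) {M : ℝ} (hM : 0 < M)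
    (hM₁ : ENNReal.ofReal M ≤ μ E₁) (hM₂ : ENNReal.ofReal M ≤ μ E₂) :
    |median μ u E₁ - median μ u E₂| ≤
      6 * (2 * R) ^ s * (2 * (∫⁻ x, g x ^ p ∂μ).toReal / M) ^ p⁻¹ :=
  abs_sub_le_iff.2 ⟨median_sub_median_le hu hg hs hp hgp hR hE₂ hE₂z hE₁z hM hM₂ hM₁,
    median_sub_median_le hu hg hs hp hgp hR hE₁ hE₁z hE₂z hM hM₁ hM₂⟩

lemma abs_median_sub_median_le_mul_rpow (hu : Measurable u) (hg : IsSGradient μ s u g)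
    (hs : 0 ≤ s) (hp : 0 < p) (hgp : ∫⁻ x, g x ^ p ∂μ ≠ ⊤) {a c r σ : ℝ} (ha : 0 ≤ a)
    (hc : 0 < c) (hr : 0 < r) (hR : μ (ball z (a * r)) ≠ ⊤) (hE₁ : MeasurableSet E₁)
    (hE₂ : MeasurableSet E₂) (hE₁z : E₁ ⊆ ball z (a * r)) (hE₂z : E₂ ⊆ ball z (a * r))
    (hM₁ : ENNReal.ofReal (c * r ^ σ) ≤ μ E₁) (hM₂ : ENNReal.ofReal (c * r ^ σ) ≤ μ E₂) :
    |median μ u E₁ - median μ u E₂| ≤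
      6 * (2 * a) ^ s * (2 * (∫⁻ x, g x ^ p ∂μ).toReal / c) ^ p⁻¹ * r ^ (s - σ / p) :=
  calc |median μ u E₁ - median μ u E₂|
      ≤ 6 * (2 * (a * r)) ^ s * (2 * (∫⁻ x, g x ^ p ∂μ).toReal / (c * r ^ σ)) ^ p⁻¹ :=
        abs_median_sub_median_le hu hg hs hp hgp hR hE₁ hE₂ hE₁z hE₂z (by positivity) hM₁ hM₂
    _ = 6 * (2 * a) ^ s * (2 * (∫⁻ x, g x ^ p ∂μ).toReal / c) ^ p⁻¹ * r ^ (s - σ / p) := by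
        rw [← mul_assoc 2, ← div_div, mul_assoc 6,
          mul_rpow_mul_div_rpow_inv (by positivity) (by positivity) hr]
        ring

lemma dist_median_ann_le [OpensMeasurableSpace X] (hu : Measurable u)
    (hg : IsSGradient μ s u g) (hs : 0 ≤ s) (hp : 0 < p) (hgp : ∫⁻ x, g x ^ p ∂μ ≠ ⊤)
    {κ c σ r r' : ℝ} {O O₀ : X} (hκ : 1 ≤ κ) (hc : 0 < c) (hσ : 0 ≤ σ) (hr : 0 < r)
    (hrr' : r ≤ r') (hr'κ : r' ≤ κ * r) (hO : dist O O₀ ≤ (κ - 1) * r)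
    (hfin : μ (ball O₀ (κ ^ 2 * r)) ≠ ⊤) (hM : ENNReal.ofReal (c * r ^ σ) ≤ μ (ann κ O r))
    (hM' : ENNReal.ofReal (c * r' ^ σ) ≤ μ (ann κ O₀ r')) :
    dist (median μ u (ann κ O r)) (median μ u (ann κ O₀ r')) ≤
      6 * (2 * κ ^ 2) ^ s * (2 * (∫⁻ x, g x ^ p ∂μ).toReal / c) ^ p⁻¹ * r ^ (s - σ / p) := by
  rw [Real.dist_eq]
  refine abs_median_sub_median_le_mul_rpow hu hg hs hp hgp (sq_nonneg κ) hc hr hfin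
    measurableSet_ann measurableSet_ann ?_ ?_ hM (hM'.trans' ?_)
  · exact sdiff_subset.trans
      (ball_subset_ball' (by nlinarith [mul_nonneg (sq_nonneg (κ - 1)) hr.le]))
  · exact sdiff_subset.trans (ball_subset_ball (by nlinarith))
  · gcongr

end Gradient

lemma ofReal_one_sub_mul_le_measure_ann {μ : Measure X} {κ cR r : ℝ} {O : X} (hcR : 0 ≤ cR)
    (hrev : μ (ball O r) ≤ ENNReal.ofReal cR * μ (ball O (κ * r)))
    (hfin : μ (ball O (κ * r)) ≠ ⊤) :
    ENNReal.ofReal (1 - cR) * μ (ball O (κ * r)) ≤ μ (ann κ O r) :=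
  calc ENNReal.ofReal (1 - cR) * μ (ball O (κ * r))
      = μ (ball O (κ * r)) - ENNReal.ofReal cR * μ (ball O (κ * r)) := by
        rw [ENNReal.ofReal_sub _ hcR, ENNReal.ofReal_one, ENNReal.sub_mul fun _ _ => hfin, one_mul]
    _ ≤ μ (ball O (κ * r)) - μ (ball O r) := tsub_le_tsub_left hrev _
    _ ≤ μ (ann κ O r) := le_measure_sdiff

lemma exists_ofReal_mul_rpow_le_measure_ann {μ : Measure X}
    (hball : ∀ (x : X) (r : ℝ), 0 < r → 0 < μ (ball x r) ∧ μ (ball x r) < ⊤)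
    {cR κ : ℝ} (hcR0 : 0 ≤ cR) (hcR1 : cR < 1)
    (hrev : ∀ (x : X) (r : ℝ), 0 < r → μ (ball x r) ≤ ENNReal.ofReal cR * μ (ball x (κ * r)))
    {σ cσ : ℝ} (hcσ : 0 < cσ)
    (hiter : ∀ (x : X) (r r₀ : ℝ), 0 < r → r < r₀ →
      μ (ball x r) ≤ ENNReal.ofReal (cσ * (r / r₀) ^ σ) * μ (ball x r₀)) (O₀ : X) :
    ∃ c > 0, ∀ (O : X) (r : ℝ), 1 < r → dist O O₀ ≤ (κ - 1) * r →
      ENNReal.ofReal (c * r ^ σ) ≤ μ (ann κ O r) := by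
  have hβ := hball O₀ 1 one_pos
  refine ⟨(1 - cR) * cσ⁻¹ * (μ (ball O₀ 1)).toReal,
    by have := ENNReal.toReal_pos hβ.1.ne' hβ.2.ne; have := sub_pos.2 hcR1; positivity,
    fun O r hr hO => ?_⟩
  have hr0 : 0 < r := one_pos.trans hr
  have hgrowth : ENNReal.ofReal (cσ⁻¹ * r ^ σ) * μ (ball O₀ 1) ≤ μ (ball O₀ r) := by
    have hk : 0 < cσ * (1 / r) ^ σ := by positivity
    have hinv : cσ⁻¹ * r ^ σ = (cσ * (1 / r) ^ σ)⁻¹ := by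
      rw [mul_inv, one_div, Real.inv_rpow hr0.le, inv_inv]
    rw [hinv, ENNReal.ofReal_inv_of_pos hk,
      ENNReal.inv_mul_le_iff (by simpa using hk) ENNReal.ofReal_ne_top]
    exact hiter O₀ 1 r one_pos hr
  have hκr : r + dist O₀ O ≤ κ * r := by rw [dist_comm]; linarith
  calc ENNReal.ofReal ((1 - cR) * cσ⁻¹ * (μ (ball O₀ 1)).toReal * r ^ σ)
      = ENNReal.ofReal (1 - cR) *
          (ENNReal.ofReal (cσ⁻¹ * r ^ σ) * ENNReal.ofReal (μ (ball O₀ 1)).toReal) := by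
        rw [← ENNReal.ofReal_mul (by positivity), ← ENNReal.ofReal_mul (by linarith)]
        ring_nf
    _ ≤ ENNReal.ofReal (1 - cR) * μ (ball O₀ r) := by
        gcongr
        exact (mul_le_mul_right ENNReal.ofReal_toReal_le _).trans hgrowth
    _ ≤ ENNReal.ofReal (1 - cR) * μ (ball O (κ * r)) := by
        gcongr
        exact ball_subset_ball' hκr
    _ ≤ μ (ann κ O r) := ofReal_one_sub_mul_le_measure_ann hcR0 (hrev O r hr0)
        (hball O _ (hr0.trans_le ((le_add_of_nonneg_right dist_nonneg).trans hκr))).2.ne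

lemma exists_tendsto_of_eventually_dist_le_geometric {α ι : Type*} [PseudoMetricSpace α]
    [CompleteSpace α] {f : ι → ℕ → α} (i₀ : ι) {K θ : ℝ} (hθ₀ : 0 ≤ θ) (hθ₁ : θ < 1)
    (hstep : ∀ᶠ j in atTop, dist (f i₀ j) (f i₀ (j + 1)) ≤ K * θ ^ j)
    (hclose : ∀ i, ∀ᶠ j in atTop, dist (f i₀ j) (f i j) ≤ K * θ ^ j) :
    ∃ c, ∀ i, Tendsto (f i) atTop (𝓝 c) := by
  obtain ⟨N, hN⟩ := eventually_atTop.1 hstep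
  have hcauchy : CauchySeq fun n => f i₀ (n + N) :=
    cauchySeq_of_le_geometric θ (K * θ ^ N) hθ₁ fun n => by
      simpa [pow_add, add_right_comm, mul_assoc, mul_comm, mul_left_comm] using
        hN (n + N) le_add_self
  obtain ⟨c, hc⟩ := cauchySeq_tendsto_of_complete hcauchy
  have hgeom : Tendsto (fun j => K * θ ^ j) atTop (𝓝 0) := by
    simpa using (tendsto_pow_atTop_nhds_zero_of_lt_one hθ₀ hθ₁).const_mul K
  exact ⟨c, fun i => ((tendsto_add_atTop_iff_nat N).1 hc).congr_dist
    (squeeze_zero' (.of_forall fun _ => dist_nonneg) (hclose i) hgeom)⟩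

lemma eventually_one_lt_pow_and_le_mul_pow {κ : ℝ} (hκ : 1 < κ) (d : ℝ) :
    ∀ᶠ j : ℕ in atTop, 1 < κ ^ j ∧ d ≤ (κ - 1) * κ ^ j :=
  ((tendsto_pow_atTop_atTop_of_one_lt hκ).eventually_gt_atTop 1).and
    (((tendsto_pow_atTop_atTop_of_one_lt hκ).eventually_ge_atTop (d / (κ - 1))).mono
      fun _ hj => (div_le_iff₀' (sub_pos.2 hκ)).1 hj)

theorem statement6_general [BorelSpace X]
    (μ : Measure X)
    (hball : ∀ (x : X) (r : ℝ), 0 < r → 0 < μ (ball x r) ∧ μ (ball x r) < ⊤)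
    (cR κ : ℝ) (hcR0 : 0 < cR) (hcR1 : cR < 1) (hκ : 1 < κ)
    (hrev : ∀ (x : X) (r : ℝ), 0 < r → μ (ball x r) ≤ ENNReal.ofReal cR * μ (ball x (κ * r)))
    (σ cσ : ℝ) (hcσ : 0 < cσ)
    (hiter : ∀ (x : X) (r r₀ : ℝ), 0 < r → r < r₀ →
      μ (ball x r) ≤ ENNReal.ofReal (cσ * (r / r₀) ^ σ) * μ (ball x r₀))
    (s p : ℝ) (hs0 : 0 < s) (hp : 0 < p) (hsp : s * p < σ)
    (u : X → ℝ) (hu : MemHomHajlasz μ s p u) :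
    ∃ c : ℝ, ∀ O : X,
      Tendsto (fun j : ℕ => median μ u (ann κ O (κ ^ j))) atTop (𝓝 c) := by
  rcases isEmpty_or_nonempty X with hX | ⟨⟨O₀⟩⟩
  · exact ⟨0, isEmptyElim⟩
  obtain ⟨hu, g, hg, hgp⟩ := hu
  obtain ⟨c, hc, hann⟩ :=
    exists_ofReal_mul_rpow_le_measure_ann hball hcR0.le hcR1 hrev hcσ hiter O₀
  have hκ0 : 0 < κ := one_pos.trans hκ
  have hσ : 0 ≤ σ := ((mul_pos hs0 hp).trans hsp).le
  have hθ : κ ^ (s - σ / p) < 1 :=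
    Real.rpow_lt_one_of_one_lt_of_neg hκ (sub_neg.2 ((lt_div_iff₀ hp).2 hsp))
  have hO₀ : ∀ r, 0 ≤ r → dist O₀ O₀ ≤ (κ - 1) * r := fun r hr =>
    (dist_self O₀).le.trans (mul_nonneg (sub_nonneg.2 hκ.le) hr)
  refine exists_tendsto_of_eventually_dist_le_geometric O₀
    (K := 6 * (2 * κ ^ 2) ^ s * (2 * (∫⁻ x, g x ^ p ∂μ).toReal / c) ^ p⁻¹)
    (by positivity) hθ ?_ fun O => ?_
  · filter_upwards [(tendsto_pow_atTop_atTop_of_one_lt hκ).eventually_gt_atTop 1] with j hj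
    have hκj : 1 < κ * κ ^ j := hj.trans_le (le_mul_of_one_le_left (by positivity) hκ.le)
    rw [pow_succ', Real.rpow_pow_comm hκ0.le]
    exact dist_median_ann_le hu hg hs0.le hp hgp.ne hκ.le hc hσ (by positivity)
      (le_mul_of_one_le_left (by positivity) hκ.le) le_rfl (hO₀ _ (by positivity))
      (hball O₀ _ (by positivity)).2.ne (hann O₀ _ hj (hO₀ _ (by positivity)))
      (hann O₀ _ hκj (hO₀ _ (by positivity)))
  · filter_upwards [eventually_one_lt_pow_and_le_mul_pow hκ (dist O O₀)] with j hj
    rw [dist_comm, Real.rpow_pow_comm hκ0.le]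
    exact dist_median_ann_le hu hg hs0.le hp hgp.ne hκ.le hc hσ (by positivity) le_rfl
      (le_mul_of_one_le_left (by positivity) hκ.le) hj.2 (hball O₀ _ (by positivity)).2.ne
      (hann O _ hj.1 hj.2) (hann O₀ _ hj.1 (hO₀ _ (by positivity)))

/-- Lemma 5.4: for `u ∈ Ṁ^{s,p}(X)` with `sp < σ`, the medians over
the annuli `A_{κ^j}(O)` converge, and the limit is independent of the basepoint. -/
theorem statement6 [BorelSpace X]
    (μ : Measure X) (hcomp : μ.IsComplete)
    (hball : ∀ (x : X) (r : ℝ), 0 < r → 0 < μ (ball x r) ∧ μ (ball x r) < ⊤)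
    (hdiam : EMetric.diam (Set.univ : Set X) = ⊤)
    (cμ : ℝ) (hcμ : 1 ≤ cμ)
    (hdoub : ∀ (x : X) (r : ℝ), 0 < r → μ (ball x (2 * r)) ≤ ENNReal.ofReal cμ * μ (ball x r))
    (cR κ : ℝ) (hcR0 : 0 < cR) (hcR1 : cR < 1) (hκ : 1 < κ)
    (hrev : ∀ (x : X) (r : ℝ), 0 < r → μ (ball x r) ≤ ENNReal.ofReal cR * μ (ball x (κ * r)))
    (σ cσ : ℝ) (hσ : 0 < σ) (hcσ : 0 < cσ)
    (hiter : ∀ (x : X) (r r₀ : ℝ), 0 < r → r < r₀ →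
      μ (ball x r) ≤ ENNReal.ofReal (cσ * (r / r₀) ^ σ) * μ (ball x r₀))
    (s p : ℝ) (hs0 : 0 < s) (hs1 : s ≤ 1) (hp : 0 < p) (hsp : s * p < σ)
    (u : X → ℝ) (hu : MemHomHajlasz μ s p u) :
    ∃ c : ℝ, ∀ O : X,
      Tendsto (fun j : ℕ => median μ u (ann κ O (κ ^ j))) atTop (𝓝 c) :=
  statement6_general μ hball cR κ hcR0 hcR1 hκ hrev σ cσ hcσ hiter s p hs0 hp hsp u hu

end Paper
end
end

section
/- Let 0 < s ≤ 1 and 0 < p < ∞ satisfy sp ≤ σ, where σ is an exponent from the iterated reverse doubling condition. Let u : X → ℝ be measurable and finite μ-a.e., let O ∈ X, and let E(O) ⊂ X be an (s,p)-thin set at infinity such that lim_{d(x,O)→∞, x ∈ X∖E(O)} u(x) = c for some c ∈ ℝ. Then lim_{j→∞} m_u(A_{κ^j}(O)) = c. -/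
open MeasureTheory Metric Set Filter
open scoped ENNReal NNReal Topology

noncomputable section
namespace Paper

variable {X : Type*} [MetricSpace X] [MeasurableSpace X]

/-
If `E(O)` is thin at infinity, the relative capacities `cap_{s,p}(E(O) ∩ A_j, 2A_j)` tend to zero.
A relative capacity dominates `μ(E(O) ∩ A_j) / diam(2A_j)^{sp}`, while reverse doubling, the
iterated reverse doubling estimate and `sp ≤ σ` give
`μ(A_j) ≳ κ^{jσ} ≥ κ^{jsp} ≳ diam(2A_j)^{sp}`. Hence eventually `E(O)` occupies less than half of
the annulus `A_j`; on the rest `u` is within `ε` of `c`, which pins the median of `u` on `A_j`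
to `[c - ε, c + ε]`.
-/

theorem ofReal_one_sub_mul_le_measure_diff {α : Type*} [MeasurableSpace α] {μ : Measure α}
    {s t : Set α} {c : ℝ} (hc : 0 ≤ c) (ht : μ t ≠ ⊤) (hst : μ s ≤ ENNReal.ofReal c * μ t) :
    ENNReal.ofReal (1 - c) * μ t ≤ μ (t \ s) := calc
  ENNReal.ofReal (1 - c) * μ t = μ t - ENNReal.ofReal c * μ t := by
    rw [ENNReal.ofReal_sub _ hc, ENNReal.sub_mul fun _ _ => ht, ENNReal.ofReal_one, one_mul]
  _ ≤ μ t - μ s := tsub_le_tsub_left hst _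
  _ ≤ μ (t \ s) := le_measure_sdiff

theorem abs_median_sub_le {α : Type*} [MeasurableSpace α] {μ : Measure α} {u : α → ℝ}
    {A E : Set α} {c ε : ℝ} (hA : μ A ≠ ⊤) (hEA : μ (E ∩ A) < μ A / 2)
    (hu : ∀ x ∈ A, x ∉ E → |u x - c| ≤ ε) :
    |median μ u A - c| ≤ ε := by
  set S := {a : ℝ | μ {x | x ∈ A ∧ a < u x} < μ A / 2}
  have hupper : c + ε ∈ S := by
    have hsub : {x | x ∈ A ∧ c + ε < u x} ⊆ E ∩ A := fun x ⟨hxA, hxu⟩ => by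
      refine ⟨?_, hxA⟩
      by_contra hxE
      linarith [(abs_le.mp (hu x hxA hxE)).2]
    exact (measure_mono hsub).trans_lt hEA
  have hlower : ∀ a ∈ S, c - ε ≤ a := by
    intro a ha
    by_contra! hac
    have hsub : A \ E ⊆ {x | x ∈ A ∧ a < u x} := fun x ⟨hxA, hxE⟩ =>
      ⟨hxA, by linarith [(abs_le.mp (hu x hxA hxE)).1]⟩
    have hhalf : μ A / 2 < μ (A \ E) := calc
      μ A / 2 < μ A - μ (E ∩ A) := by
        refine lt_tsub_iff_right.mpr ?_
        calc μ A / 2 + μ (E ∩ A) < μ A / 2 + μ A / 2 :=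
              ENNReal.add_lt_add_left (ENNReal.div_ne_top hA two_ne_zero) hEA
          _ = μ A := ENNReal.add_halves _
      _ ≤ μ (A \ E) := by rw [← sdiff_inter_self_eq_sdiff]; exact le_measure_sdiff
    exact (hhalf.trans_le (measure_mono hsub)).not_gt ha
  change |sInf S - c| ≤ ε
  rw [abs_sub_le_iff]
  constructor
  · linarith [csInf_le ⟨c - ε, hlower⟩ hupper]
  · linarith [le_csInf ⟨_, hupper⟩ hlower]

theorem measure_div_diam_rpow_le_relCap (μ : Measure X) (s : ℝ) {p : ℝ} (hp : 0 ≤ p)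
    {S F : Set X} (hSF : S ⊆ F) :
    μ S / ENNReal.ofReal (diam F ^ (s * p)) ≤ relCap μ s p S F := by
  refine le_iInf₂ fun v ⟨⟨hv, _⟩, _, hv1⟩ => le_trans (ENNReal.div_le_div_right ?_ _) le_self_add
  have hsub : S ⊆ {x | 1 ≤ ENNReal.ofReal |v x| ^ p} ∩ F := fun x hx => by
    refine ⟨(ENNReal.one_rpow p).symm.le.trans (ENNReal.rpow_le_rpow ?_ hp), hSF hx⟩
    exact ENNReal.one_le_ofReal.mpr ((hv1 x hx).trans (le_abs_self _))
  calc μ S ≤ μ.restrict F {x | 1 ≤ ENNReal.ofReal |v x| ^ p} :=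
        (measure_mono hsub).trans (Measure.le_restrict_apply _ _)
    _ ≤ lpNormP μ p v F := by
        simpa [lpNormP] using mul_meas_ge_le_lintegral₀
          (hv.abs.ennreal_ofReal.pow_const p).aemeasurable (μ := μ.restrict F) 1

theorem diam_annL_two_le {α : Type*} [MetricSpace α] {κ r : ℝ} (hκr : 0 ≤ κ * r) (O : α) :
    diam (annL κ 2 O r) ≤ 4 * κ * r :=
  calc diam (annL κ 2 O r) ≤ 2 * (2 * (κ * r)) :=
        (diam_mono sdiff_subset isBounded_ball).trans (diam_ball (by positivity))
    _ = 4 * κ * r := by ring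

theorem ann_subset_annL {α : Type*} [MetricSpace α] {κ Λ r : ℝ} (hΛ : 1 ≤ Λ) (hκr : 0 ≤ κ * r)
    (hr : 0 ≤ r) (O : α) : ann κ O r ⊆ annL κ Λ O r := fun _ ⟨hxκ, hxr⟩ =>
  ⟨ball_subset_ball (le_mul_of_one_le_left hκr hΛ) hxκ,
    fun h => hxr (ball_subset_ball (div_le_self hr hΛ) h)⟩

theorem ofReal_mul_measure_ball_one_le_measure_ann {μ : Measure X} {O : X} {cR cσ σ κ r : ℝ}
    (hcR : 0 ≤ cR) (hcσ : 0 < cσ) (hκr : 0 < κ * r) (hfin : μ (ball O (κ * r)) ≠ ⊤)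
    (hrev : μ (ball O r) ≤ ENNReal.ofReal cR * μ (ball O (κ * r)))
    (hiter : μ (ball O 1) ≤ ENNReal.ofReal (cσ * (1 / (κ * r)) ^ σ) * μ (ball O (κ * r))) :
    ENNReal.ofReal ((1 - cR) / cσ * (κ * r) ^ σ) * μ (ball O 1) ≤ μ (ann κ O r) := by
  have hcancel : (κ * r) ^ σ * (1 / (κ * r)) ^ σ = 1 := by
    rw [← Real.mul_rpow hκr.le (by positivity), mul_one_div_cancel hκr.ne', Real.one_rpow]
  calc _ ≤ ENNReal.ofReal ((1 - cR) / cσ * (κ * r) ^ σ) *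
          (ENNReal.ofReal (cσ * (1 / (κ * r)) ^ σ) * μ (ball O (κ * r))) := by
        gcongr
    _ = ENNReal.ofReal (1 - cR) * μ (ball O (κ * r)) := by
        rw [← mul_assoc, ← ENNReal.ofReal_mul' (by positivity)]
        congr 2
        field_simp
        linear_combination (1 - cR) * hcancel
    _ ≤ μ (ann κ O r) := ofReal_one_sub_mul_le_measure_diff hcR hfin hrev

theorem measure_inter_ann_lt_half {μ : Measure X} {O : X} {E : Set X} {cR cσ σ κ s p r : ℝ}
    (hcR0 : 0 ≤ cR) (hcR1 : cR ≤ 1) (hcσ : 0 < cσ) (hκ : 1 ≤ κ) (hr : 1 ≤ r) (hσ : 0 ≤ σ)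
    (hp : 0 ≤ p) (hsp0 : 0 ≤ s * p) (hsp : s * p ≤ σ) (hfin : μ (ball O (κ * r)) ≠ ⊤)
    (hrev : μ (ball O r) ≤ ENNReal.ofReal cR * μ (ball O (κ * r)))
    (hiter : μ (ball O 1) ≤ ENNReal.ofReal (cσ * (1 / (κ * r)) ^ σ) * μ (ball O (κ * r)))
    -- `4 κ r` bounds `diam (annL κ 2 O r)`, and the factor `2` accounts for the half.
    (hcap : relCap μ s p (E ∩ ann κ O r) (annL κ 2 O r) <
      ENNReal.ofReal ((1 - cR) / (2 * cσ * (4 * κ) ^ (s * p))) * μ (ball O 1)) :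
    μ (E ∩ ann κ O r) < μ (ann κ O r) / 2 := by
  have hκr : 0 < κ * r := by positivity
  have hS : E ∩ ann κ O r ⊆ annL κ 2 O r :=
    inter_subset_right.trans (ann_subset_annL one_le_two hκr.le (by positivity) O)
  have hdiam : ENNReal.ofReal (diam (annL κ 2 O r) ^ (s * p)) ≤
      ENNReal.ofReal ((4 * κ * r) ^ (s * p)) :=
    ENNReal.ofReal_le_ofReal
      (Real.rpow_le_rpow diam_nonneg (diam_annL_two_le hκr.le O) hsp0)
  have hgrowth : r ^ (s * p) ≤ (κ * r) ^ σ :=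
    (Real.rpow_le_rpow_of_exponent_le hr hsp).trans
      (Real.rpow_le_rpow (by positivity) (le_mul_of_one_le_left (by positivity) hκ) hσ)
  have hmeasure := (ENNReal.div_le_div_left hdiam _).trans
    (measure_div_diam_rpow_le_relCap μ s hp hS) |>.trans_lt hcap
  calc μ (E ∩ ann κ O r)
      < ENNReal.ofReal ((1 - cR) / (2 * cσ * (4 * κ) ^ (s * p))) * μ (ball O 1) *
          ENNReal.ofReal ((4 * κ * r) ^ (s * p)) :=
        (ENNReal.div_lt_iff (Or.inl (ENNReal.ofReal_pos.mpr (by positivity)).ne')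
          (Or.inl ENNReal.ofReal_ne_top)).mp hmeasure
    _ = ENNReal.ofReal ((1 - cR) / (2 * cσ) * r ^ (s * p)) * μ (ball O 1) := by
        rw [mul_right_comm, ← ENNReal.ofReal_mul' (by positivity), Real.mul_rpow (x := 4 * κ)
          (by positivity) (by positivity)]
        congr 2
        field_simp
    _ ≤ ENNReal.ofReal ((1 - cR) / cσ * (κ * r) ^ σ / 2) * μ (ball O 1) := by
        gcongr
        calc (1 - cR) / (2 * cσ) * r ^ (s * p) ≤ (1 - cR) / (2 * cσ) * (κ * r) ^ σ := by
              gcongr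
          _ = (1 - cR) / cσ * (κ * r) ^ σ / 2 := by ring
    _ = ENNReal.ofReal ((1 - cR) / cσ * (κ * r) ^ σ) * μ (ball O 1) / 2 := by
        rw [ENNReal.ofReal_div_of_pos two_pos, ENNReal.ofReal_ofNat]
        exact ENNReal.mul_div_right_comm.symm
    _ ≤ μ (ann κ O r) / 2 := by
        gcongr
        exact ofReal_mul_measure_ball_one_le_measure_ann hcR0 hcσ hκr hfin hrev hiter

theorem ThinAtInfinity.eventually_relCap_lt {μ : Measure X} {s p κ Λ : ℝ} {O : X} {E : Set X}
    (hE : ThinAtInfinity μ s p κ O E) (hΛ : 1 < Λ) {δ : ℝ≥0∞} (hδ : 0 < δ) :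
    ∀ᶠ m : ℕ in atTop, relCap μ s p (E ∩ ann κ O (κ ^ m)) (annL κ Λ O (κ ^ m)) < δ :=
  ((hE Λ hΛ).eventually_lt_const hδ).mono fun _ hm => (ENNReal.le_tsum 0).trans_lt hm

theorem TendstoOutside.eventually_forall_ann {α : Type*} [MetricSpace α] {O : α} {E : Set α}
    {u : α → ℝ} {c κ : ℝ} (hlim : TendstoOutside O E u c) (hκ : 1 < κ) {ε : ℝ} (hε : 0 < ε) :
    ∀ᶠ m : ℕ in atTop, ∀ x ∈ ann κ O (κ ^ m), x ∉ E → |u x - c| < ε := by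
  obtain ⟨N, hN⟩ := hlim ε hε
  filter_upwards [(tendsto_pow_atTop_atTop_of_one_lt hκ).eventually_gt_atTop (N : ℝ)]
    with m hm x hx hxE
  exact hN x hxE (hm.trans_le (not_lt.mp fun h => hx.2 (mem_ball.mpr h)))

theorem statement9_general
    (μ : Measure X)
    (hball : ∀ (x : X) (r : ℝ), 0 < r → 0 < μ (ball x r) ∧ μ (ball x r) < ⊤)
    (cR κ : ℝ) (hcR0 : 0 < cR) (hcR1 : cR < 1) (hκ : 1 < κ)
    (hrev : ∀ (x : X) (r : ℝ), 0 < r → μ (ball x r) ≤ ENNReal.ofReal cR * μ (ball x (κ * r)))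
    (σ cσ : ℝ) (hσ : 0 < σ) (hcσ : 0 < cσ)
    (hiter : ∀ (x : X) (r r₀ : ℝ), 0 < r → r < r₀ →
      μ (ball x r) ≤ ENNReal.ofReal (cσ * (r / r₀) ^ σ) * μ (ball x r₀))
    (s p : ℝ) (hs0 : 0 < s) (hp : 0 < p) (hsp : s * p ≤ σ)
    (u : X → ℝ)
    (O : X) (E : Set X) (hE : ThinAtInfinity μ s p κ O E)
    (c : ℝ) (hlim : TendstoOutside O E u c) :
    Tendsto (fun j : ℕ => median μ u (ann κ O (κ ^ j))) atTop (𝓝 c) := by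
  have hδ : 0 < ENNReal.ofReal ((1 - cR) / (2 * cσ * (4 * κ) ^ (s * p))) * μ (ball O 1) :=
    ENNReal.mul_pos (ENNReal.ofReal_pos.mpr (div_pos (sub_pos.mpr hcR1) (by positivity))).ne'
      (hball O 1 one_pos).1.ne'
  have hhalf : ∀ᶠ m : ℕ in atTop, μ (E ∩ ann κ O (κ ^ m)) < μ (ann κ O (κ ^ m)) / 2 := by
    filter_upwards [hE.eventually_relCap_lt one_lt_two hδ] with m hcap
    have hr : 1 ≤ κ ^ m := one_le_pow₀ hκ.le
    exact measure_inter_ann_lt_half hcR0.le hcR1.le hcσ hκ.le hr hσ.le hp.le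
      (mul_pos hs0 hp).le hsp (hball O _ (by positivity)).2.ne (hrev O _ (by positivity))
      (hiter O 1 _ one_pos (one_lt_mul_of_lt_of_le hκ hr)) hcap
  refine Metric.tendsto_nhds.mpr fun ε hε => ?_
  filter_upwards [hhalf, hlim.eventually_forall_ann hκ (half_pos hε)] with m hEA hu
  have hA : μ (ann κ O (κ ^ m)) ≠ ⊤ :=
    ((measure_mono sdiff_subset).trans_lt (hball O _ (by positivity)).2).ne
  rw [Real.dist_eq]
  exact (abs_median_sub_le hA hEA fun x hx hxE => (hu x hx hxE).le).trans_lt (half_lt_self hε)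

/-- Theorem 7.5: if `sp ≤ σ`, `E(O)` is `(s,p)`-thin at infinity and
`u(x) → c` as `d(x,O) → ∞` along `X \ E(O)`, then the medians over the annuli
`A_{κ^j}(O)` also converge to `c`. -/
theorem statement9 [BorelSpace X]
    (μ : Measure X) (hcomp : μ.IsComplete)
    (hball : ∀ (x : X) (r : ℝ), 0 < r → 0 < μ (ball x r) ∧ μ (ball x r) < ⊤)
    (hdiam : EMetric.diam (Set.univ : Set X) = ⊤)
    (cμ : ℝ) (hcμ : 1 ≤ cμ)
    (hdoub : ∀ (x : X) (r : ℝ), 0 < r → μ (ball x (2 * r)) ≤ ENNReal.ofReal cμ * μ (ball x r))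
    (cR κ : ℝ) (hcR0 : 0 < cR) (hcR1 : cR < 1) (hκ : 1 < κ)
    (hrev : ∀ (x : X) (r : ℝ), 0 < r → μ (ball x r) ≤ ENNReal.ofReal cR * μ (ball x (κ * r)))
    (σ cσ : ℝ) (hσ : 0 < σ) (hcσ : 0 < cσ)
    (hiter : ∀ (x : X) (r r₀ : ℝ), 0 < r → r < r₀ →
      μ (ball x r) ≤ ENNReal.ofReal (cσ * (r / r₀) ^ σ) * μ (ball x r₀))
    (s p : ℝ) (hs0 : 0 < s) (hs1 : s ≤ 1) (hp : 0 < p) (hsp : s * p ≤ σ)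
    (u : X → ℝ) (hu : Measurable u)
    (O : X) (E : Set X) (hE : ThinAtInfinity μ s p κ O E)
    (c : ℝ) (hlim : TendstoOutside O E u c) :
    Tendsto (fun j : ℕ => median μ u (ann κ O (κ ^ j))) atTop (𝓝 c) :=
  statement9_general μ hball cR κ hcR0 hcR1 hκ hrev σ cσ hσ hcσ hiter s p hs0 hp hsp u O E hE c hlim

end Paper
end
end
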